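/- arXiv:2506.00380 — 11 statements merged into one kernel-verified Lean document; each statement's English description precedes it below -/
import Mathlib

section
/- Let g be a convex geometry on a finite set I. Then for every convex set K ⊆ I, the closure of the set of extreme points of K is K itself: g(Ex(K)) = K. -/
/-- A (loopless) convex geometry on a finite ground set `I`: a closure operator
on subsets of `I` satisfying looplessness and the anti-exchange axiom. -/
structure ConvexGeometry (I : Type*) [DecidableEq I] [Fintype I] where
  cl : Finset I → Finset I
  subset_cl : ∀ A, A ⊆ cl A
  mono : ∀ ⦃A B : Finset I⦄, A ⊆ B → cl A ⊆ cl B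
  idem : ∀ A, cl (cl A) = cl A
  loopless : cl ∅ = ∅
  antiExchange : ∀ (A : Finset I) (a b : I), a ≠ b → a ∉ cl A → b ∉ cl A →
    a ∈ cl (insert b A) → b ∉ cl (insert a A)

variable {I : Type*} [DecidableEq I] [Fintype I]

/-- The set of extreme points of `K`: `Ex(K) = {a ∈ K : a ∉ g(K \ {a})}`. -/
def ConvexGeometry.Ex (g : ConvexGeometry I) (K : Finset I) : Finset I :=
  K.filter fun a => a ∉ g.cl (K.erase a)

/-- If `a ∉ cl (A \ {a})` then `a ∉ cl (cl A \ {a})`. -/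
theorem ConvexGeometry.aux (g : ConvexGeometry I) (A : Finset I) (a : I)
    (ha : a ∉ g.cl (A.erase a)) : a ∉ g.cl ((g.cl A).erase a) := by
  classical
  set s : Finset (Finset I) :=
    Finset.univ.filter (fun D => A.erase a ⊆ D ∧ a ∉ D ∧ a ∉ g.cl D) with hs
  have hmem : ∀ D, D ∈ s ↔ A.erase a ⊆ D ∧ a ∉ D ∧ a ∉ g.cl D := by
    intro D; simp [hs]
  have hne : s.Nonempty :=
    ⟨A.erase a, (hmem _).2 ⟨Finset.Subset.refl _, Finset.notMem_erase _ _, ha⟩⟩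
  obtain ⟨D, hDs, hDmax⟩ := s.exists_max_image Finset.card hne
  obtain ⟨hAD, haD, haclD⟩ := (hmem D).1 hDs
  -- Claim: cl A \ {a} ⊆ cl D
  have hclaim : (g.cl A).erase a ⊆ g.cl D := by
    intro c hc
    rw [Finset.mem_erase] at hc
    obtain ⟨hca, hcA⟩ := hc
    by_contra hcD
    have hcD' : c ∉ D := fun h => hcD (g.subset_cl D h)
    -- maximality: a ∈ cl (insert c D)
    have hains : a ∈ g.cl (insert c D) := by
      by_contra hnot
      have hmem' : insert c D ∈ s := (hmem _).2
        ⟨hAD.trans (Finset.subset_insert _ _),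
         by simp [Finset.mem_insert, haD, Ne.symm hca], hnot⟩
      have := hDmax _ hmem'
      have : (insert c D).card ≤ D.card := this
      rw [Finset.card_insert_of_notMem hcD'] at this
      omega
    -- c ∈ cl (insert a D)
    have hAsub : A ⊆ insert a D := by
      intro x hx
      by_cases hxa : x = a
      · simp [hxa]
      · exact Finset.mem_insert_of_mem (hAD (Finset.mem_erase.2 ⟨hxa, hx⟩))
    have hcins : c ∈ g.cl (insert a D) := g.mono hAsub hcA
    exact (g.antiExchange D c a hca hcD haclD hcins) hains
  intro hcon
  have : a ∈ g.cl (g.cl D) := g.mono hclaim hcon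
  rw [g.idem] at this
  exact haclD this

/-- For every convex set `K ⊆ I`, the closure of the set of
extreme points of `K` is `K` itself: `g(Ex(K)) = K`. -/
theorem stmt_1 (g : ConvexGeometry I) (K : Finset I) (hK : g.cl K = K) :
    g.cl (g.Ex K) = K := by
  classical
  set s : Finset (Finset I) :=
    Finset.univ.filter (fun A => A ⊆ K ∧ g.cl A = K) with hs
  have hmem : ∀ A, A ∈ s ↔ A ⊆ K ∧ g.cl A = K := by intro A; simp [hs]
  have hne : s.Nonempty := ⟨K, (hmem _).2 ⟨Finset.Subset.refl _, hK⟩⟩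
  obtain ⟨A, hAs, hAmin⟩ := s.exists_min_image Finset.card hne
  obtain ⟨hAK, hclA⟩ := (hmem A).1 hAs
  have hAEx : A ⊆ g.Ex K := by
    intro a haA
    have haK : a ∈ K := hAK haA
    have ha : a ∉ g.cl (A.erase a) := by
      intro hcl
      -- then cl (A.erase a) = K, contradicting minimality
      have hsub : A ⊆ g.cl (A.erase a) := by
        intro x hx
        by_cases hxa : x = a
        · rwa [hxa]
        · exact g.subset_cl _ (Finset.mem_erase.2 ⟨hxa, hx⟩)
      have h1 : K ⊆ g.cl (A.erase a) := by
        calc K = g.cl A := hclA.symm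
        _ ⊆ g.cl (g.cl (A.erase a)) := g.mono hsub
        _ = g.cl (A.erase a) := g.idem _
      have h2 : g.cl (A.erase a) ⊆ K := by
        rw [← hK]; exact g.mono ((A.erase_subset a).trans hAK)
      have heq : g.cl (A.erase a) = K := Finset.Subset.antisymm h2 h1
      have hmem' : A.erase a ∈ s := (hmem _).2 ⟨(A.erase_subset a).trans hAK, heq⟩
      have hle := hAmin _ hmem'
      have : A.card ≤ (A.erase a).card := hle
      rw [Finset.card_erase_of_mem haA] at this
      have hpos : 0 < A.card := Finset.card_pos.2 ⟨a, haA⟩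
      omega
    have := g.aux A a ha
    rw [hclA] at this
    exact Finset.mem_filter.2 ⟨haK, this⟩
  apply Finset.Subset.antisymm
  · calc g.cl (g.Ex K) ⊆ g.cl K := g.mono (Finset.filter_subset _ _)
    _ = K := hK
  · calc K = g.cl A := hclA.symm
    _ ⊆ g.cl (g.Ex K) := g.mono hAEx
end

section
/- Let g be a convex geometry on a finite set I, let S ⊆ I and T = I \ S. Then the following are equivalent: (i) S is convex and the contraction g/_S is discrete, i.e., g(S) = S and g(S ∪ B) ∩ T = B for every B ⊆ T; (ii) T ⊆ Ex(I), i.e., g(I \ {a}) = I \ {a} for every a ∈ T. Consequently, the number of subsets S ⊆ I such that S is convex and g/_S is discrete equals 2^{|Ex(I)|}. -/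
variable {I : Type*} [DecidableEq I] [Fintype I]

lemma erase_fixed_iff (g : ConvexGeometry I) (a : I) :
    g.cl (Finset.univ.erase a) = Finset.univ.erase a ↔
      a ∉ g.cl (Finset.univ.erase a) := by
  constructor
  · intro h
    rw [h]
    exact Finset.notMem_erase a _
  · intro h
    apply Finset.Subset.antisymm
    · intro x hx
      rw [Finset.mem_erase]
      exact ⟨fun hxa => h (hxa ▸ hx), Finset.mem_univ x⟩
    · exact g.subset_cl _

lemma main_iff (g : ConvexGeometry I) (S : Finset I) :
    (g.cl S = S ∧ ∀ B ⊆ Sᶜ, g.cl (S ∪ B) ∩ Sᶜ = B) ↔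
      ∀ a ∈ Sᶜ, a ∉ g.cl (Finset.univ.erase a) := by
  constructor
  · rintro ⟨hS, hB⟩ a ha
    have haS : a ∉ S := Finset.mem_compl.mp ha
    have hunion : S ∪ Sᶜ.erase a = Finset.univ.erase a := by
      ext x
      simp only [Finset.mem_union, Finset.mem_erase, Finset.mem_compl,
        Finset.mem_univ, and_true]
      constructor
      · rintro (hx | ⟨hxa, _⟩)
        · exact fun hxa => haS (hxa ▸ hx)
        · exact hxa
      · intro hxa
        by_cases hx : x ∈ S
        · exact Or.inl hx
        · exact Or.inr ⟨hxa, hx⟩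
    have key := hB (Sᶜ.erase a) (Finset.erase_subset _ _)
    rw [hunion] at key
    intro hacl
    have : a ∈ g.cl (Finset.univ.erase a) ∩ Sᶜ := Finset.mem_inter.mpr ⟨hacl, ha⟩
    rw [key] at this
    exact (Finset.notMem_erase a _) this
  · intro h
    have hsub : ∀ (A : Finset I) (x : I), x ∉ A → A ⊆ Finset.univ.erase x := by
      intro A x hx y hy
      exact Finset.mem_erase.mpr ⟨fun hyx => hx (hyx ▸ hy), Finset.mem_univ y⟩
    constructor
    · apply Finset.Subset.antisymm
      · intro x hx
        by_contra hxS
        exact h x (Finset.mem_compl.mpr hxS)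
          (g.mono (hsub S x hxS) hx)
      · exact g.subset_cl S
    · intro B hBc
      apply Finset.Subset.antisymm
      · intro x hx
        rw [Finset.mem_inter] at hx
        obtain ⟨hxcl, hxc⟩ := hx
        by_contra hxB
        have hxS : x ∉ S := Finset.mem_compl.mp hxc
        have : S ∪ B ⊆ Finset.univ.erase x := by
          intro y hy
          rcases Finset.mem_union.mp hy with hy | hy
          · exact hsub S x hxS hy
          · exact hsub B x hxB hy
        exact h x hxc (g.mono this hxcl)
      · intro x hx
        exact Finset.mem_inter.mpr
          ⟨g.subset_cl _ (Finset.mem_union_right _ hx), hBc hx⟩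

/-- For `S ⊆ I` and `T = I \ S`, the following are equivalent:
(i) `S` is convex and the contraction `g/_S` is discrete;
(ii) `T ⊆ Ex(I)`, i.e. `g(I \ {a}) = I \ {a}` for every `a ∈ T`.
Consequently, the number of subsets `S` with `S` convex and `g/_S` discrete
equals `2^|Ex(I)|`. -/
theorem stmt_2 (g : ConvexGeometry I) :
    (∀ S : Finset I,
      (g.cl S = S ∧ ∀ B ⊆ Sᶜ, g.cl (S ∪ B) ∩ Sᶜ = B) ↔
        (∀ a ∈ Sᶜ, g.cl (Finset.univ.erase a) = Finset.univ.erase a)) ∧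
    (Finset.univ.filter fun S : Finset I =>
        g.cl S = S ∧ ∀ B ⊆ Sᶜ, g.cl (S ∪ B) ∩ Sᶜ = B).card =
      2 ^ (g.Ex Finset.univ).card := by
  constructor
  · intro S
    rw [main_iff]
    exact forall₂_congr fun a _ => (erase_fixed_iff g a).symm
  · have hEx : ∀ a : I, a ∈ g.Ex Finset.univ ↔ a ∉ g.cl (Finset.univ.erase a) := by
      intro a
      simp [ConvexGeometry.Ex]
    have hfilter : (Finset.univ.filter fun S : Finset I =>
        g.cl S = S ∧ ∀ B ⊆ Sᶜ, g.cl (S ∪ B) ∩ Sᶜ = B) =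
        (g.Ex Finset.univ).powerset.image (·ᶜ) := by
      ext S
      simp only [Finset.mem_filter, Finset.mem_univ, true_and, Finset.mem_image,
        Finset.mem_powerset, main_iff]
      constructor
      · intro h
        exact ⟨Sᶜ, fun a ha => (hEx a).mpr (h a ha), compl_compl S⟩
      · rintro ⟨T, hT, rfl⟩ a ha
        rw [compl_compl] at ha
        exact (hEx a).mp (hT ha)
    rw [hfilter, Finset.card_image_of_injective _ compl_injective,
      Finset.card_powerset]
end

section
/- Let g be a convex geometry on a finite set I, let n ≥ 1 be an integer, and let f : I → {1,…,n}. Then f is extremal if and only if f is convex, i.e., if and only if the preimage f^{-1}({1,…,m}) is convex for every m ∈ {0,1,…,n}. -/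
variable {I : Type*} [DecidableEq I] [Fintype I]

/-- Extension lemma: a convex set strictly inside a convex set can be extended
by one point, staying convex. -/
theorem ConvexGeometry.ext_one (g : ConvexGeometry I) {K C : Finset I}
    (hK : g.cl K = K) (hC : g.cl C = C) (hCK : C ⊆ K) (hne : C ≠ K) :
    ∃ a ∈ K, a ∉ C ∧ g.cl (insert a C) = insert a C := by
  have hKC : (K \ C).Nonempty := by
    rw [Finset.sdiff_nonempty]
    intro h
    exact hne (Finset.Subset.antisymm hCK h)
  obtain ⟨a, haKC, hamin⟩ :=
    Finset.exists_min_image (K \ C) (fun a => (g.cl (insert a C)).card) hKC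
  obtain ⟨haK, haC⟩ := Finset.mem_sdiff.mp haKC
  refine ⟨a, haK, haC, ?_⟩
  apply Finset.Subset.antisymm _ (g.subset_cl _)
  intro b hb
  by_contra hbn
  have hbC : b ∉ C := fun h => hbn (Finset.mem_insert_of_mem h)
  have hba : b ≠ a := fun h => hbn (h ▸ Finset.mem_insert_self _ _)
  have hbK : b ∈ K := by
    have h1 : insert a C ⊆ K := Finset.insert_subset haK hCK
    have := g.mono h1 hb
    rwa [hK] at this
  have hax : a ∉ g.cl (insert b C) := by
    refine g.antiExchange C b a hba ?_ ?_ hb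
    · rw [hC]; exact hbC
    · rw [hC]; exact haC
  have hsub : g.cl (insert b C) ⊆ g.cl (insert a C) := by
    have h1 : insert b C ⊆ g.cl (insert a C) :=
      Finset.insert_subset hb ((Finset.subset_insert a C).trans (g.subset_cl _))
    have := g.mono h1
    rwa [g.idem] at this
  have hlt : (g.cl (insert b C)).card < (g.cl (insert a C)).card := by
    apply Finset.card_lt_card
    exact (Finset.ssubset_iff_of_subset hsub).mpr
      ⟨a, g.subset_cl _ (Finset.mem_insert_self _ _), hax⟩
  have := hamin b (Finset.mem_sdiff.mpr ⟨hbK, hbC⟩)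
  omega

/-- Chain lemma: if `C ⊊ K` are convex, there is a point `a ∈ K \ C` such that
`K \ {a}` is convex. -/
theorem ConvexGeometry.chain (g : ConvexGeometry I) {K : Finset I} (hK : g.cl K = K) :
    ∀ (m : ℕ) (C : Finset I), (K \ C).card ≤ m → C ⊆ K → g.cl C = C → C ≠ K →
      ∃ a ∈ K, a ∉ C ∧ g.cl (K.erase a) = K.erase a := by
  intro m
  induction m with
  | zero =>
    intro C hcard hCK hC hne
    exfalso
    have hKC : (K \ C).Nonempty := by
      rw [Finset.sdiff_nonempty]
      intro h
      exact hne (Finset.Subset.antisymm hCK h)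
    have := Finset.card_pos.mpr hKC
    omega
  | succ m ih =>
    intro C hcard hCK hC hne
    obtain ⟨a, haK, haC, hconv⟩ := g.ext_one hK hC hCK hne
    by_cases h : insert a C = K
    · refine ⟨a, haK, haC, ?_⟩
      rw [← h, Finset.erase_insert haC]
      exact hC
    · have hcard' : (K \ insert a C).card ≤ m := by
        have h1 : K \ insert a C = (K \ C).erase a := by
          rw [Finset.sdiff_insert]
        have h2 : ((K \ C).erase a).card = (K \ C).card - 1 :=
          Finset.card_erase_of_mem (Finset.mem_sdiff.mpr ⟨haK, haC⟩)
        have h3 : 1 ≤ (K \ C).card :=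
          Finset.card_pos.mpr ⟨a, Finset.mem_sdiff.mpr ⟨haK, haC⟩⟩
        rw [h1, h2]; omega
      obtain ⟨b, hbK, hbC, hbe⟩ :=
        ih (insert a C) hcard' (Finset.insert_subset haK hCK) hconv h
      exact ⟨b, hbK, fun hb => hbC (Finset.mem_insert_of_mem hb), hbe⟩

/-- `f : I → {1,…,n}` is extremal if and only if it is convex,
i.e. the preimage of `{1,…,m}` is convex for every `m ∈ {0,…,n}`. -/
theorem stmt_4 (g : ConvexGeometry I) (n : ℕ) (hn : 1 ≤ n) (f : I → ℕ)
    (hf : ∀ x, f x ∈ Finset.Icc 1 n) :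
    (∀ K : Finset I, g.cl K = K → K.Nonempty →
        ∃ a ∈ K, f a = K.sup f ∧ a ∉ g.cl (K.erase a)) ↔
      (∀ m ≤ n,
        g.cl (Finset.univ.filter fun x => f x ∈ Finset.Icc 1 m) =
          Finset.univ.filter fun x => f x ∈ Finset.Icc 1 m) := by
  constructor
  · intro H m _hm
    set A : Finset I := Finset.univ.filter fun x => f x ∈ Finset.Icc 1 m with hA
    show g.cl A = A
    rcases A.eq_empty_or_nonempty with hAe | hAne
    · rw [hAe, g.loopless]
    apply Finset.Subset.antisymm _ (g.subset_cl _)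
    by_contra hcon
    obtain ⟨x, hxcl, hxA⟩ := Finset.not_subset.mp hcon
    have hxm : m < f x := by
      have h1 := hf x
      rw [Finset.mem_Icc] at h1
      have : ¬ (f x ∈ Finset.Icc 1 m) := by
        intro h; exact hxA (by rw [hA]; exact Finset.mem_filter.mpr ⟨Finset.mem_univ _, h⟩)
      rw [Finset.mem_Icc] at this
      omega
    set K := g.cl A with hKdef
    have hKconv : g.cl K = K := g.idem A
    have hKne : K.Nonempty := hAne.mono (g.subset_cl A)
    obtain ⟨a, haK, hasup, haex⟩ := H K hKconv hKne
    have hma : m < f a := by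
      have h1 : f x ≤ K.sup f := Finset.le_sup hxcl
      omega
    have haA : a ∉ A := by
      intro h
      rw [hA, Finset.mem_filter, Finset.mem_Icc] at h
      omega
    have hsubA : A ⊆ K.erase a := by
      intro y hy
      exact Finset.mem_erase.mpr ⟨fun h => haA (h ▸ hy), g.subset_cl A hy⟩
    exact haex (g.mono hsubA haK)
  · intro H K hK hKne
    set M := K.sup f with hM
    have hM1 : 1 ≤ M := by
      obtain ⟨x, hx⟩ := hKne
      have h1 := (Finset.mem_Icc.mp (hf x)).1
      have h2 : f x ≤ M := Finset.le_sup hx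
      omega
    have hMn : M ≤ n := by
      apply Finset.sup_le
      intro x _
      exact (Finset.mem_Icc.mp (hf x)).2
    set A : Finset I := Finset.univ.filter fun x => f x ∈ Finset.Icc 1 (M - 1) with hA
    have hAconv : g.cl A = A := H (M - 1) (by omega)
    set B : Finset I := K ∩ A with hB
    have hBconv : g.cl B = B := by
      apply Finset.Subset.antisymm _ (g.subset_cl _)
      intro y hy
      rw [hB, Finset.mem_inter]
      constructor
      · have := g.mono (Finset.inter_subset_left (s₁ := K) (s₂ := A)) hy
        rwa [hK] at this
      · have := g.mono (Finset.inter_subset_right (s₁ := K) (s₂ := A)) hy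
        rwa [hAconv] at this
    obtain ⟨z, hzK, hzM⟩ := Finset.exists_mem_eq_sup K hKne f
    have hBne : B ≠ K := by
      intro h
      have : z ∈ B := h ▸ hzK
      rw [hB, Finset.mem_inter, hA, Finset.mem_filter, Finset.mem_Icc] at this
      omega
    obtain ⟨a, haK, haB, haerase⟩ :=
      g.chain hK (K \ B).card B le_rfl (Finset.inter_subset_left) hBconv hBne
    refine ⟨a, haK, ?_, ?_⟩
    · have h1 : f a ≤ M := Finset.le_sup haK
      have h2 : ¬ (f a ∈ Finset.Icc 1 (M - 1)) := by
        intro h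
        exact haB (by rw [hB, Finset.mem_inter]; exact ⟨haK, by rw [hA]; exact Finset.mem_filter.mpr ⟨Finset.mem_univ _, h⟩⟩)
      rw [Finset.mem_Icc] at h2
      have h3 := (Finset.mem_Icc.mp (hf a)).1
      omega
    · rw [haerase]
      exact Finset.notMem_erase a K
end

section
/- Let g be a convex geometry on a finite set I, let n ≥ 1 be an integer, and let f : I → {1,…,n}. Write A_i = f^{-1}({1,…,i}) for 0 ≤ i ≤ n (so A_0 = ∅ and A_n = I). Then f is strictly extremal if and only if every A_i is convex and, for every 0 ≤ i ≤ n−1, the minor g_{A_i:A_{i+1}} is discrete, i.e., g(A_i ∪ B) ∩ (A_{i+1} \ A_i) = B for every B ⊆ A_{i+1} \ A_i. -/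
variable {I : Type*} [DecidableEq I] [Fintype I]

/-- Writing `A_i = f⁻¹({1,…,i})`, the function `f : I → {1,…,n}`
is strictly extremal if and only if every `A_i` is convex and every minor
`g_{A_i:A_{i+1}}` (for `0 ≤ i ≤ n-1`) is discrete. -/
theorem stmt_5 (g : ConvexGeometry I) (n : ℕ) (hn : 1 ≤ n) (f : I → ℕ)
    (hf : ∀ x, f x ∈ Finset.Icc 1 n)
    (A : ℕ → Finset I)
    (hA : ∀ i, A i = Finset.univ.filter fun x => f x ∈ Finset.Icc 1 i) :
    (∀ K : Finset I, g.cl K = K → K.Nonempty →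
        ∀ x ∈ K, f x = K.sup f → x ∉ g.cl (K.erase x)) ↔
      ((∀ i ≤ n, g.cl (A i) = A i) ∧
        ∀ i < n, ∀ B ⊆ A (i + 1) \ A i,
          g.cl (A i ∪ B) ∩ (A (i + 1) \ A i) = B) := by
  have hf' : ∀ x, 1 ≤ f x ∧ f x ≤ n := fun x => Finset.mem_Icc.1 (hf x)
  have hmem : ∀ i x, x ∈ A i ↔ f x ≤ i := by
    intro i x
    rw [hA]
    simp only [Finset.mem_filter, Finset.mem_univ, true_and, Finset.mem_Icc]
    have := hf' x
    omega
  constructor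
  · intro hse
    have hconv : ∀ i ≤ n, g.cl (A i) = A i := by
      intro i _
      by_contra hne
      have hsub : A i ⊆ g.cl (A i) := g.subset_cl _
      have hne' : ∃ y ∈ g.cl (A i), y ∉ A i := by
        by_contra h
        push_neg at h
        exact hne (Finset.Subset.antisymm h hsub)
      obtain ⟨y, hyK, hyA⟩ := hne'
      have hKne : (g.cl (A i)).Nonempty := ⟨y, hyK⟩
      obtain ⟨x, hxK, hxs⟩ := Finset.exists_mem_eq_sup _ hKne f
      have hxA : x ∉ A i := by
        rw [hmem] at hyA ⊢
        have hle : f y ≤ f x := hxs ▸ Finset.le_sup hyK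
        omega
      refine hse _ (g.idem _) hKne x hxK hxs.symm ?_
      have hsub2 : A i ⊆ (g.cl (A i)).erase x :=
        fun z hz => Finset.mem_erase.2 ⟨fun h => hxA (h ▸ hz), hsub hz⟩
      exact g.mono hsub2 hxK
    refine ⟨hconv, ?_⟩
    intro i hi B hB
    apply Finset.Subset.antisymm
    · intro x hx
      obtain ⟨hx1, hx2⟩ := Finset.mem_inter.1 hx
      by_contra hxB
      have hxA1 : x ∈ A (i + 1) := (Finset.mem_sdiff.1 hx2).1
      have hxA0 : x ∉ A i := (Finset.mem_sdiff.1 hx2).2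
      have hKsub : g.cl (A i ∪ B) ⊆ A (i + 1) := by
        have h1 : A i ∪ B ⊆ A (i + 1) := by
          intro z hz
          rcases Finset.mem_union.1 hz with h | h
          · exact (hmem _ z).2 (le_trans ((hmem i z).1 h) (Nat.le_succ i))
          · exact (Finset.mem_sdiff.1 (hB h)).1
        calc g.cl (A i ∪ B) ⊆ g.cl (A (i + 1)) := g.mono h1
          _ = A (i + 1) := hconv (i + 1) hi
      have hKne : (g.cl (A i ∪ B)).Nonempty := ⟨x, hx1⟩
      have hxs : f x = (g.cl (A i ∪ B)).sup f := by
        apply le_antisymm (Finset.le_sup hx1)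
        apply Finset.sup_le
        intro z hz
        have h1 := (hmem (i + 1) z).1 (hKsub hz)
        have h2 := (hmem (i + 1) x).1 hxA1
        rw [hmem] at hxA0
        omega
      refine absurd ?_ (hse _ (g.idem _) hKne x hx1 hxs)
      have hsub2 : A i ∪ B ⊆ (g.cl (A i ∪ B)).erase x := by
        intro z hz
        refine Finset.mem_erase.2 ⟨?_, g.subset_cl _ hz⟩
        rintro rfl
        rcases Finset.mem_union.1 hz with h | h
        · exact hxA0 h
        · exact hxB h
      exact g.mono hsub2 hx1
    · intro x hxB
      exact Finset.mem_inter.2 ⟨g.subset_cl _ (Finset.mem_union_right _ hxB), hB hxB⟩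
  · rintro ⟨hconv, hdisc⟩ K hKc hKne x hxK hxs
    intro hcon
    set m := f x with hm
    have hm1 : 1 ≤ m ∧ m ≤ n := hf' x
    set i := m - 1 with hi
    have hi1 : i + 1 = m := by omega
    have hin : i < n := by omega
    set B := (K.erase x) ∩ (A (i + 1) \ A i) with hBdef
    have hBsub : B ⊆ A (i + 1) \ A i := Finset.inter_subset_right
    have heq := hdisc i hin B hBsub
    have hKsub : K.erase x ⊆ A i ∪ B := by
      intro z hz
      have hzK : z ∈ K := Finset.mem_of_mem_erase hz
      have hfz : f z ≤ m := le_trans (Finset.le_sup hzK) hxs.ge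
      by_cases hle : f z ≤ i
      · exact Finset.mem_union_left _ ((hmem i z).2 hle)
      · refine Finset.mem_union_right _ (Finset.mem_inter.2 ⟨hz, Finset.mem_sdiff.2 ⟨?_, ?_⟩⟩)
        · exact (hmem _ z).2 (by omega)
        · rw [hmem]; omega
    have hxin : x ∈ g.cl (A i ∪ B) ∩ (A (i + 1) \ A i) := by
      refine Finset.mem_inter.2 ⟨g.mono hKsub hcon, Finset.mem_sdiff.2 ⟨?_, ?_⟩⟩
      · rw [hmem]; omega
      · rw [hmem]; omega
    rw [heq] at hxin
    exact (Finset.notMem_erase x K) (Finset.mem_inter.1 hxin).1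
end

section
/- Let g be a convex geometry on a finite set I. Then there exist polynomials P, Q ∈ ℚ[X] such that for every integer n ≥ 1, P(n) equals the number of extremal functions f : I → {1,…,n} and Q(n) equals the number of strictly extremal functions f : I → {1,…,n}. -/
variable {I : Type*} [DecidableEq I] [Fintype I]

/-- `f : I → ℕ` is extremal w.r.t. `g`: for every nonempty convex set `K`,
some element of `K` attaining the maximum of `f` on `K` is an extreme point of `K`. -/
def IsExtremal (g : ConvexGeometry I) (f : I → ℕ) : Prop :=
  ∀ K : Finset I, g.cl K = K → K.Nonempty →
    ∃ a ∈ K, f a = K.sup f ∧ a ∉ g.cl (K.erase a)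

/-- `f : I → ℕ` is strictly extremal w.r.t. `g`: for every nonempty convex set `K`,
every element of `K` attaining the maximum of `f` on `K` is an extreme point of `K`. -/
def IsStrictlyExtremal (g : ConvexGeometry I) (f : I → ℕ) : Prop :=
  ∀ K : Finset I, g.cl K = K → K.Nonempty →
    ∀ x ∈ K, f x = K.sup f → x ∉ g.cl (K.erase x)

open Finset

open scoped Classical

set_option linter.unusedSectionVars false
set_option linter.unusedVariables false

namespace Stmt6Aux

/-- The rank of a value `v` relative to the image of `f`. -/
noncomputable def rk (f : I → ℕ) (v : ℕ) : ℕ :=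
  ((Finset.univ.image f).filter (· ≤ v)).card

/-- The normalized (rank) version of `f`. -/
noncomputable def rank (f : I → ℕ) : I → ℕ := fun x => rk f (f x)

lemma rk_le_rk (f : I → ℕ) {u v : ℕ} (h : u ≤ v) : rk f u ≤ rk f v := by
  apply card_le_card
  intro a ha
  rw [mem_filter] at ha ⊢
  exact ⟨ha.1, le_trans ha.2 h⟩

lemma rk_lt_rk (f : I → ℕ) {u v : ℕ} (hu : u ∈ Finset.univ.image f) (h : v < u) :
    rk f v < rk f u := by
  apply card_lt_card
  constructor
  · intro a ha
    rw [mem_filter] at ha ⊢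
    exact ⟨ha.1, le_trans ha.2 h.le⟩
  · intro hsub
    have := hsub (mem_filter.2 ⟨hu, le_refl u⟩)
    rw [mem_filter] at this
    omega

lemma le_iff_rank_le (f : I → ℕ) (x y : I) : f x ≤ f y ↔ rank f x ≤ rank f y := by
  constructor
  · exact fun h => rk_le_rk f h
  · intro h
    by_contra hc
    push_neg at hc
    have := rk_lt_rk f (mem_image_of_mem f (mem_univ x)) hc
    unfold rank at h
    omega

lemma rk_inj (f : I → ℕ) {u v : ℕ} (hu : u ∈ Finset.univ.image f)
    (hv : v ∈ Finset.univ.image f) (h : rk f u = rk f v) : u = v := by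
  rcases lt_trichotomy u v with h1 | h1 | h1
  · exact absurd h (by have := rk_lt_rk f hv h1; omega)
  · exact h1
  · exact absurd h (by have := rk_lt_rk f hu h1; omega)

lemma rk_le_iff (f : I → ℕ) {u v : ℕ} (hu : u ∈ Finset.univ.image f)
    (hv : v ∈ Finset.univ.image f) : rk f u ≤ rk f v ↔ u ≤ v := by
  constructor
  · intro h
    by_contra hc
    push_neg at hc
    have := rk_lt_rk f hu hc
    omega
  · exact rk_le_rk f

lemma eq_sup_iff (f : I → ℕ) {K : Finset I} {x : I} (hx : x ∈ K) :
    f x = K.sup f ↔ ∀ y ∈ K, f y ≤ f x :=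
  ⟨fun h y hy => h ▸ le_sup hy, fun h => le_antisymm (le_sup hx) (Finset.sup_le h)⟩

lemma sup_transfer (f : I → ℕ) {K : Finset I} {x : I} (hx : x ∈ K) :
    f x = K.sup f ↔ rank f x = K.sup (rank f) := by
  rw [eq_sup_iff f hx, eq_sup_iff (rank f) hx]
  exact forall₂_congr fun y _ => le_iff_rank_le f y x

lemma isExtremal_rank_iff (g : ConvexGeometry I) (f : I → ℕ) :
    IsExtremal g (rank f) ↔ IsExtremal g f := by
  constructor <;> intro h K hK hne <;> obtain ⟨a, ha, hs, he⟩ := h K hK hne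
  · exact ⟨a, ha, (sup_transfer f ha).mpr hs, he⟩
  · exact ⟨a, ha, (sup_transfer f ha).mp hs, he⟩

lemma isStrictlyExtremal_rank_iff (g : ConvexGeometry I) (f : I → ℕ) :
    IsStrictlyExtremal g (rank f) ↔ IsStrictlyExtremal g f := by
  constructor <;> intro h K hK hne x hx hs
  · exact h K hK hne x hx ((sup_transfer f hx).mp hs)
  · exact h K hK hne x hx ((sup_transfer f hx).mpr hs)

lemma one_le_rank (f : I → ℕ) (x : I) : 1 ≤ rank f x :=
  card_pos.mpr ⟨f x, mem_filter.2 ⟨mem_image_of_mem f (mem_univ x), le_refl _⟩⟩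

lemma rank_le_card (f : I → ℕ) (x : I) : rank f x ≤ (Finset.univ.image f).card :=
  card_le_card (filter_subset _ _)

lemma image_card_le (f : I → ℕ) : (Finset.univ.image f).card ≤ Fintype.card I :=
  (card_image_le).trans (by simp)

lemma image_rank (f : I → ℕ) :
    Finset.univ.image (rank f) = (Finset.univ.image f).image (rk f) := by
  rw [image_image]
  rfl

lemma card_image_rank (f : I → ℕ) :
    (Finset.univ.image (rank f)).card = (Finset.univ.image f).card := by
  rw [image_rank]
  apply card_image_of_injOn
  intro u hu v hv h
  exact rk_inj f hu hv h

lemma rank_idem (f : I → ℕ) : rank (rank f) = rank f := by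
  funext x
  have hfx : f x ∈ Finset.univ.image f := mem_image_of_mem f (mem_univ x)
  have key : ((Finset.univ.image f).image (rk f)).filter (· ≤ rk f (f x)) =
      ((Finset.univ.image f).filter (· ≤ f x)).image (rk f) := by
    ext b
    constructor
    · intro hb
      obtain ⟨hb1, hb2⟩ := mem_filter.mp hb
      obtain ⟨v, hv, rfl⟩ := mem_image.mp hb1
      exact mem_image.mpr ⟨v, mem_filter.mpr ⟨hv, (rk_le_iff f hv hfx).mp hb2⟩, rfl⟩
    · intro hb
      obtain ⟨v, hv, rfl⟩ := mem_image.mp hb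
      obtain ⟨hv1, hv2⟩ := mem_filter.mp hv
      exact mem_filter.mpr ⟨mem_image.mpr ⟨v, hv1, rfl⟩, rk_le_rk f hv2⟩
  show ((Finset.univ.image (rank f)).filter (· ≤ rk f (f x))).card = rk f (f x)
  rw [image_rank, key, card_image_of_injOn (fun u hu v hv h =>
    rk_inj f (mem_of_mem_filter u hu) (mem_of_mem_filter v hv) h)]
  rfl

lemma image_eq_Icc {f0 : I → ℕ} (h : rank f0 = f0) :
    Finset.univ.image f0 = Finset.Icc 1 (Finset.univ.image f0).card := by
  apply eq_of_subset_of_card_le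
  · intro v hv
    obtain ⟨x, _, rfl⟩ := mem_image.mp hv
    rw [mem_Icc]
    constructor
    · have := one_le_rank f0 x
      rw [h] at this
      exact this
    · have := rank_le_card f0 x
      rw [h] at this
      exact this
  · rw [Nat.card_Icc]
    omega

/-- The set of normalized functions satisfying `E`. -/
noncomputable def NF (E : (I → ℕ) → Prop) : Finset (I → ℕ) :=
  (Fintype.piFinset fun _ : I => Finset.Icc 1 (Fintype.card I)).filter
    fun f0 => rank f0 = f0 ∧ E f0

/-- The set of functions with values in `{1,…,n}` satisfying `E`. -/
noncomputable def AA (E : (I → ℕ) → Prop) (n : ℕ) : Finset (I → ℕ) :=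
  (Fintype.piFinset fun _ : I => Finset.Icc 1 n).filter E

lemma rank_mem_NF {E : (I → ℕ) → Prop} (hE : ∀ f, E (rank f) ↔ E f) {n : ℕ}
    {f : I → ℕ} (hf : f ∈ AA E n) : rank f ∈ NF E := by
  rw [AA, mem_filter] at hf
  rw [NF, mem_filter]
  refine ⟨?_, rank_idem f, (hE f).mpr hf.2⟩
  rw [Fintype.mem_piFinset]
  intro x
  rw [mem_Icc]
  exact ⟨one_le_rank f x, (rank_le_card f x).trans (image_card_le f)⟩

lemma fiber_card {E : (I → ℕ) → Prop} (hE : ∀ f, E (rank f) ↔ E f) (n : ℕ)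
    {f0 : I → ℕ} (hf0 : f0 ∈ NF E) :
    ((AA E n).filter fun f => rank f = f0).card =
      n.choose ((Finset.univ.image f0).card) := by
  rw [NF, mem_filter] at hf0
  obtain ⟨hpi0, hnorm, hE0⟩ := hf0
  set m := (Finset.univ.image f0).card with hm
  have hIcc : Finset.univ.image f0 = Finset.Icc 1 m := image_eq_Icc hnorm
  have hbnd : ∀ x : I, 1 ≤ f0 x ∧ f0 x ≤ m := by
    intro x
    have : f0 x ∈ Finset.Icc 1 m := by
      rw [← hIcc]; exact mem_image_of_mem f0 (mem_univ x)
    exact mem_Icc.mp this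
  refine (Finset.card_bij (t := Finset.powersetCard m (Finset.Icc 1 n))
    (fun (f : I → ℕ) _ => Finset.univ.image f) ?_ ?_ ?_).trans ?_
  -- maps into powersetCard
  · intro f hf
    rw [mem_filter] at hf
    obtain ⟨hfA, hrf⟩ := hf
    rw [AA, mem_filter] at hfA
    rw [mem_powersetCard]
    constructor
    · intro v hv
      obtain ⟨x, _, rfl⟩ := mem_image.mp hv
      exact (Fintype.mem_piFinset.mp hfA.1) x
    · rw [← card_image_rank f, hrf]
  -- injective
  · intro f hf f' hf' himg
    replace himg : Finset.univ.image f = Finset.univ.image f' := himg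
    rw [mem_filter] at hf hf'
    have hrk : rk f = rk f' := by
      funext v
      rw [rk, rk, himg]
    funext x
    have h1 : rk f (f x) = rk f (f' x) := by
      have e1 : rk f (f x) = f0 x := congrFun hf.2 x
      have e2 : rk f' (f' x) = f0 x := congrFun hf'.2 x
      rw [e1, hrk, e2]
    exact rk_inj f (mem_image_of_mem f (mem_univ x))
      (by rw [himg]; exact mem_image_of_mem f' (mem_univ x)) h1
  -- surjective
  · intro s hs
    rw [mem_powersetCard] at hs
    obtain ⟨hsub, hcard⟩ := hs
    set σ := s.orderEmbOfFin hcard with hσ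
    have hlt : ∀ x : I, f0 x - 1 < m := fun x => by have := hbnd x; omega
    set f : I → ℕ := fun x => σ ⟨f0 x - 1, hlt x⟩ with hfdef
    have hfs : ∀ x, f x ∈ s := fun x => orderEmbOfFin_mem s hcard _
    have himg : Finset.univ.image f = s := by
      apply Finset.Subset.antisymm
      · intro v hv
        obtain ⟨x, _, rfl⟩ := mem_image.mp hv
        exact hfs x
      · intro y hy
        have : y ∈ Set.range σ := by rw [range_orderEmbOfFin]; exact hy
        obtain ⟨j, hj⟩ := this
        have hj1 : (j : ℕ) + 1 ∈ Finset.univ.image f0 := by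
          rw [hIcc, mem_Icc]
          omega
        obtain ⟨x, _, hx⟩ := mem_image.mp hj1
        refine mem_image.mpr ⟨x, mem_univ x, ?_⟩
        rw [hfdef]
        simp only
        rw [← hj]
        congr 1
        ext
        simp
        omega
    have hrank : rank f = f0 := by
      funext x
      set i : Fin m := ⟨f0 x - 1, hlt x⟩ with hi
      show ((Finset.univ.image f).filter (· ≤ f x)).card = f0 x
      rw [himg]
      have hfilter : s.filter (· ≤ f x) = (Finset.Iic i).image (fun j => (σ j : ℕ)) := by
        ext v
        constructor
        · intro hv
          obtain ⟨hv1, hv2⟩ := mem_filter.mp hv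
          have : v ∈ Set.range σ := by rw [range_orderEmbOfFin]; exact hv1
          obtain ⟨j, rfl⟩ := this
          refine mem_image.mpr ⟨j, ?_, rfl⟩
          rw [mem_Iic]
          exact σ.le_iff_le.mp hv2
        · intro hv
          obtain ⟨j, hj, rfl⟩ := mem_image.mp hv
          rw [mem_Iic] at hj
          exact mem_filter.mpr ⟨orderEmbOfFin_mem s hcard j, σ.le_iff_le.mpr hj⟩
      rw [hfilter, card_image_of_injective _ (fun a b hab => σ.injective hab),
        Fin.card_Iic]
      have := hbnd x
      simp only [hi]
      omega
    refine ⟨f, ?_, himg⟩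
    rw [mem_filter]
    refine ⟨?_, hrank⟩
    rw [AA, mem_filter]
    constructor
    · rw [Fintype.mem_piFinset]
      exact fun x => hsub (hfs x)
    · exact (hE f).mp (by rw [hrank]; exact hE0)
  · rw [card_powersetCard, Nat.card_Icc, Nat.add_sub_cancel]

lemma count_eq {E : (I → ℕ) → Prop} (hE : ∀ f, E (rank f) ↔ E f) (n : ℕ) :
    Nat.card {f : I → ℕ // (∀ x, f x ∈ Finset.Icc 1 n) ∧ E f} =
      ∑ f0 ∈ NF E, n.choose ((Finset.univ.image f0).card) := by
  have e : {f : I → ℕ // (∀ x, f x ∈ Finset.Icc 1 n) ∧ E f} ≃ {f // f ∈ AA E n} :=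
    Equiv.subtypeEquivRight (by
      intro f
      rw [AA, mem_filter, Fintype.mem_piFinset])
  rw [Nat.card_congr e, Nat.card_eq_finsetCard,
    card_eq_sum_card_fiberwise (fun f hf => rank_mem_NF hE hf)]
  exact Finset.sum_congr rfl fun f0 hf0 => fiber_card hE n hf0

/-- The counting polynomial. -/
noncomputable def PP (E : (I → ℕ) → Prop) : Polynomial ℚ :=
  ∑ f0 ∈ NF E,
    ((((Finset.univ.image f0).card).factorial : ℚ)⁻¹ •
      descPochhammer ℚ ((Finset.univ.image f0).card))

lemma PP_eval (E : (I → ℕ) → Prop) (n : ℕ) :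
    (PP E).eval (n : ℚ) = ∑ f0 ∈ NF E, (n.choose ((Finset.univ.image f0).card) : ℚ) := by
  rw [PP, Polynomial.eval_finset_sum]
  refine Finset.sum_congr rfl fun f0 _ => ?_
  set k := (Finset.univ.image f0).card
  rw [Polynomial.eval_smul, smul_eq_mul, descPochhammer_eval_eq_descFactorial,
    Nat.descFactorial_eq_factorial_mul_choose, Nat.cast_mul, ← mul_assoc,
    inv_mul_cancel₀ (by exact_mod_cast k.factorial_ne_zero), one_mul]

end Stmt6Aux

/-- There exist polynomials `P, Q ∈ ℚ[X]` such that for every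
`n ≥ 1`, `P(n)` counts the extremal functions `f : I → {1,…,n}` and `Q(n)`
counts the strictly extremal ones. -/
theorem stmt_6 (g : ConvexGeometry I) :
    ∃ P Q : Polynomial ℚ, ∀ n : ℕ, 1 ≤ n →
      P.eval (n : ℚ) =
        Nat.card {f : I → ℕ // (∀ x, f x ∈ Finset.Icc 1 n) ∧ IsExtremal g f} ∧
      Q.eval (n : ℚ) =
        Nat.card {f : I → ℕ // (∀ x, f x ∈ Finset.Icc 1 n) ∧ IsStrictlyExtremal g f} := by
  refine ⟨Stmt6Aux.PP (IsExtremal g), Stmt6Aux.PP (IsStrictlyExtremal g), fun n _ => ⟨?_, ?_⟩⟩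
  · rw [Stmt6Aux.PP_eval, Stmt6Aux.count_eq (Stmt6Aux.isExtremal_rank_iff g) n]
    push_cast
    rfl
  · rw [Stmt6Aux.PP_eval, Stmt6Aux.count_eq (Stmt6Aux.isStrictlyExtremal_rank_iff g) n]
    push_cast
    rfl
end

section
/- Let g be a convex geometry on a finite set I. Then there exists a polynomial P ∈ ℚ[X] such that for every integer n ≥ 1, P(n) equals the number of enriched convex functions f : I → ⟦n⟧. -/
variable {I : Type*} [DecidableEq I] [Fintype I]

/-- The rank of a nonzero integer in the linear order
`⟦n⟧ = {-1 ⊏ 1 ⊏ -2 ⊏ 2 ⊏ …}`: `j ⊑ k` iff `rk j ≤ rk k`. -/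
def rk (j : ℤ) : ℤ := 2 * |j| + if 0 < j then 1 else 0

/-- `f : I → ⟦n⟧` (realized as nonzero integers of absolute value ≤ n)
is enriched convex w.r.t. `g`:
(1) the preimage of each principal down-set of `⟦n⟧` is convex;
(2) for each `i ∈ {1,…,n}`, the minor `g_{A_{i-1}:A_i}` restricted to
`f⁻¹(-i)` is discrete. -/
def EnrichedConvex (g : ConvexGeometry I) (n : ℕ) (f : I → ℤ) : Prop :=
  (∀ m : ℤ, m ≠ 0 → |m| ≤ (n : ℤ) →
      g.cl (Finset.univ.filter fun a => rk (f a) ≤ rk m) =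
        Finset.univ.filter fun a => rk (f a) ≤ rk m) ∧
  (∀ i : ℕ, 1 ≤ i → i ≤ n →
    ∀ B ⊆ Finset.univ.filter fun a => f a = -(i : ℤ),
      g.cl ((Finset.univ.filter fun a => rk (f a) ≤ rk ((i : ℤ) - 1)) ∪ B) ∩
          (Finset.univ.filter fun a => f a = -(i : ℤ)) = B)


namespace Stmt8

/-- totality: `f` maps into `⟦n⟧`. -/
def Tot (n : ℕ) (f : I → ℤ) : Prop := ∀ x, f x ≠ 0 ∧ |f x| ≤ (n : ℤ)

/-- level set -/
def L (f : I → ℤ) (t : ℤ) : Finset I := Finset.univ.filter fun a => rk (f a) ≤ t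

def expand (ι : ℤ → ℤ) (f₀ : I → ℤ) (a : I) : ℤ :=
  if 0 < f₀ a then ι (f₀ a) else -(ι (-(f₀ a)))

lemma rk_eq (j : ℤ) : rk j = if 0 < j then 2*j+1 else -(2*j) := by
  unfold rk
  rcases lt_or_ge 0 j with h | h
  · rw [abs_of_pos h]; simp [h]
  · rw [abs_of_nonpos h]; rw [if_neg (by omega), if_neg (by omega)]; ring

lemma rk_ge_two {j : ℤ} (h : j ≠ 0) : 2 ≤ rk j := by
  rw [rk_eq]; rcases lt_or_ge 0 j with h' | h'
  · rw [if_pos h']; omega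
  · rw [if_neg (by omega)]; omega

lemma rk_self (x : ℤ) : rk x = 2 * |x| + (if 0 < x then 1 else 0) := rfl

lemma mem_L {f : I → ℤ} {t : ℤ} {a : I} : a ∈ L f t ↔ rk (f a) ≤ t := by
  simp [L]

lemma exists_L_eq (f f' : I → ℤ)
    (hmono : ∀ a b, rk (f' a) ≤ rk (f' b) ↔ rk (f a) ≤ rk (f b))
    (hpos : ∀ a, 1 ≤ rk (f' a)) (t : ℤ) : ∃ t', L f t = L f' t' := by
  rcases (L f t).eq_empty_or_nonempty with h | h
  · refine ⟨0, h.trans ?_⟩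
    symm; rw [Finset.eq_empty_iff_forall_notMem]
    intro a ha; rw [mem_L] at ha; have := hpos a; omega
  · obtain ⟨b, hb, hmax⟩ := Finset.exists_max_image (L f t) (fun a => rk (f' a)) h
    refine ⟨rk (f' b), ?_⟩
    ext a
    rw [mem_L, mem_L]
    constructor
    · intro ha; exact hmax a (mem_L.mpr ha)
    · intro ha; exact le_trans ((hmono a b).mp ha) (mem_L.mp hb)

def C1 (g : ConvexGeometry I) (n : ℕ) (f : I → ℤ) : Prop :=
  ∀ m : ℤ, m ≠ 0 → |m| ≤ (n : ℤ) → g.cl (L f (rk m)) = L f (rk m)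

def Neg (f : I → ℤ) (i : ℕ) : Finset I := Finset.univ.filter fun a => f a = -(i : ℤ)

def Aset (f : I → ℤ) (i : ℕ) : Finset I :=
  Finset.univ.filter fun a => rk (f a) ≤ rk ((i : ℤ) - 1)

def C2 (g : ConvexGeometry I) (n : ℕ) (f : I → ℤ) : Prop :=
  ∀ i : ℕ, 1 ≤ i → i ≤ n → ∀ B ⊆ Neg f i, g.cl (Aset f i ∪ B) ∩ Neg f i = B

lemma enriched_def (g : ConvexGeometry I) (n : ℕ) (f : I → ℤ) :
    EnrichedConvex g n f ↔ C1 g n f ∧ C2 g n f := Iff.rfl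

lemma C1_iff_forall (g : ConvexGeometry I) {n : ℕ} {f : I → ℤ} (htot : Tot n f) :
    C1 g n f ↔ ∀ t, g.cl (L f t) = L f t := by
  constructor
  · intro h t
    rcases (L f t).eq_empty_or_nonempty with he | hne
    · rw [he, g.loopless]
    · obtain ⟨b, hb, hmax⟩ := Finset.exists_max_image (L f t) (fun a => rk (f a)) hne
      have hLt : L f t = L f (rk (f b)) := by
        ext a; rw [mem_L, mem_L]
        exact ⟨fun ha => hmax a (mem_L.mpr ha), fun ha => le_trans ha (mem_L.mp hb)⟩
      rw [hLt]; exact h (f b) (htot b).1 (htot b).2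
  · intro h m _ _; exact h (rk m)

section relabel

variable {k n : ℕ} {ι : ℤ → ℤ} {f₀ : I → ℤ}

lemma rk_expand (hr : ∀ j ∈ Set.Icc (1:ℤ) (k:ℤ), 1 ≤ ι j) (htot : Tot k f₀) (a : I) :
    rk (expand ι f₀ a) = 2 * ι |f₀ a| + (if 0 < f₀ a then 1 else 0) := by
  obtain ⟨h0, hk⟩ := htot a
  unfold expand
  rcases lt_or_ge 0 (f₀ a) with h | h
  · rw [abs_of_pos h] at hk ⊢
    have hpos := hr _ ⟨by omega, hk⟩
    rw [if_pos h, if_pos h, rk_eq, if_pos (by omega : (0:ℤ) < ι (f₀ a))]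
  · have hlt : f₀ a < 0 := by omega
    rw [abs_of_neg hlt] at hk ⊢
    have hpos := hr _ ⟨by omega, hk⟩
    rw [if_neg (by omega), if_neg (by omega), rk_eq, if_neg (by omega)]
    ring

lemma abs_expand (hr : ∀ j ∈ Set.Icc (1:ℤ) (k:ℤ), 1 ≤ ι j) (htot : Tot k f₀) (a : I) :
    |expand ι f₀ a| = ι |f₀ a| := by
  obtain ⟨h0, hk⟩ := htot a
  unfold expand
  rcases lt_or_ge 0 (f₀ a) with h | h
  · rw [abs_of_pos h] at hk ⊢
    have hpos := hr _ ⟨by omega, hk⟩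
    rw [if_pos h, abs_of_pos (by omega)]
  · have hlt : f₀ a < 0 := by omega
    rw [abs_of_neg hlt] at hk ⊢
    have hpos := hr _ ⟨by omega, hk⟩
    rw [if_neg (by omega), abs_neg, abs_of_pos (by omega)]

lemma expand_tot (hr : ∀ j ∈ Set.Icc (1:ℤ) (k:ℤ), 1 ≤ ι j ∧ ι j ≤ (n:ℤ))
    (htot : Tot k f₀) : Tot n (expand ι f₀) := by
  intro a
  obtain ⟨h0, hk⟩ := htot a
  have habs := abs_expand (fun j hj => (hr j hj).1) htot a
  have hmem : |f₀ a| ∈ Set.Icc (1:ℤ) (k:ℤ) := ⟨Int.one_le_abs h0, hk⟩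
  obtain ⟨h1, h2⟩ := hr _ hmem
  constructor
  · intro hc; rw [hc] at habs; simp at habs; omega
  · omega

lemma rk_le_rk_iff (hmono : StrictMonoOn ι (Set.Icc 1 (k:ℤ)))
    (hr : ∀ j ∈ Set.Icc (1:ℤ) (k:ℤ), 1 ≤ ι j) (htot : Tot k f₀) (a b : I) :
    rk (f₀ a) ≤ rk (f₀ b) ↔ rk (expand ι f₀ a) ≤ rk (expand ι f₀ b) := by
  obtain ⟨ha0, hak⟩ := htot a
  obtain ⟨hb0, hbk⟩ := htot b
  have hma : |f₀ a| ∈ Set.Icc (1:ℤ) (k:ℤ) := ⟨Int.one_le_abs ha0, hak⟩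
  have hmb : |f₀ b| ∈ Set.Icc (1:ℤ) (k:ℤ) := ⟨Int.one_le_abs hb0, hbk⟩
  have hlt : |f₀ a| < |f₀ b| ↔ ι |f₀ a| < ι |f₀ b| := (hmono.lt_iff_lt hma hmb).symm
  have heq : |f₀ a| = |f₀ b| ↔ ι |f₀ a| = ι |f₀ b| :=
    ⟨fun h => by rw [h], fun h => hmono.injOn hma hmb h⟩
  rw [rk_expand hr htot, rk_expand hr htot, rk_self (f₀ a), rk_self (f₀ b)]
  split_ifs <;> omega

lemma expand_eq_neg_iff (hmono : StrictMonoOn ι (Set.Icc 1 (k:ℤ)))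
    (hr : ∀ j ∈ Set.Icc (1:ℤ) (k:ℤ), 1 ≤ ι j) (htot : Tot k f₀) (a : I)
    {j₀ : ℤ} (hj₀ : j₀ ∈ Set.Icc (1:ℤ) (k:ℤ)) :
    expand ι f₀ a = -(ι j₀) ↔ f₀ a = -j₀ := by
  obtain ⟨h0, hk⟩ := htot a
  have hj₀1 := hj₀.1
  have hj₀2 := hj₀.2
  have hj1 := hr _ hj₀
  unfold expand
  rcases lt_or_ge 0 (f₀ a) with h | h
  · rw [if_pos h]
    rw [abs_of_pos h] at hk
    have := hr (f₀ a) ⟨by omega, hk⟩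
    constructor
    · intro hc; omega
    · intro hc; omega
  · have hlt : f₀ a < 0 := by omega
    rw [if_neg (by omega)]
    rw [abs_of_neg hlt] at hk
    have hmem : -f₀ a ∈ Set.Icc (1:ℤ) (k:ℤ) := ⟨by omega, hk⟩
    constructor
    · intro hc
      have : ι (-f₀ a) = ι j₀ := by omega
      have := hmono.injOn hmem hj₀ this
      omega
    · intro hc; rw [hc]; simp

lemma expand_no_neg_fiber (hr : ∀ j ∈ Set.Icc (1:ℤ) (k:ℤ), 1 ≤ ι j) (htot : Tot k f₀)
    (a : I) {i : ℤ} (hi : 1 ≤ i) (hex : ∀ j ∈ Set.Icc (1:ℤ) (k:ℤ), ι j ≠ i) :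
    expand ι f₀ a ≠ -i := by
  obtain ⟨h0, hk⟩ := htot a
  unfold expand
  rcases lt_or_ge 0 (f₀ a) with h | h
  · rw [if_pos h]
    rw [abs_of_pos h] at hk
    have := hr (f₀ a) ⟨by omega, hk⟩
    omega
  · have hlt : f₀ a < 0 := by omega
    rw [if_neg (by omega)]
    rw [abs_of_neg hlt] at hk
    have hmem : -f₀ a ∈ Set.Icc (1:ℤ) (k:ℤ) := ⟨by omega, hk⟩
    have := hex _ hmem
    omega

lemma rk_le_rk_pred_iff {x : ℤ} (hx : x ≠ 0) {i : ℤ} (hi : 1 ≤ i) :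
    rk x ≤ rk (i-1) ↔ rk x ≤ 2*i-1 := by
  have h2 := rk_ge_two hx
  rw [rk_eq (i-1)]
  split_ifs with h <;> omega

lemma rk_expand_le_pred_iff (hmono : StrictMonoOn ι (Set.Icc 1 (k:ℤ)))
    (hr : ∀ j ∈ Set.Icc (1:ℤ) (k:ℤ), 1 ≤ ι j) (htot : Tot k f₀) (a : I)
    {j₀ : ℤ} (hj₀ : j₀ ∈ Set.Icc (1:ℤ) (k:ℤ)) :
    rk (expand ι f₀ a) ≤ 2 * ι j₀ - 1 ↔ rk (f₀ a) ≤ 2 * j₀ - 1 := by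
  obtain ⟨h0, hk⟩ := htot a
  have hmem : |f₀ a| ∈ Set.Icc (1:ℤ) (k:ℤ) := ⟨Int.one_le_abs h0, hk⟩
  have hlt : |f₀ a| < j₀ ↔ ι |f₀ a| < ι j₀ := (hmono.lt_iff_lt hmem hj₀).symm
  rw [rk_expand hr htot, rk_self (f₀ a)]
  split_ifs <;> omega

variable (g : ConvexGeometry I)

lemma C1_transfer (hmono : StrictMonoOn ι (Set.Icc 1 (k:ℤ)))
    (hr : ∀ j ∈ Set.Icc (1:ℤ) (k:ℤ), 1 ≤ ι j ∧ ι j ≤ (n:ℤ))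
    (htot : Tot k f₀) : C1 g n (expand ι f₀) ↔ C1 g k f₀ := by
  have hr1 : ∀ j ∈ Set.Icc (1:ℤ) (k:ℤ), 1 ≤ ι j := fun j hj => (hr j hj).1
  have htotf : Tot n (expand ι f₀) := expand_tot hr htot
  rw [C1_iff_forall g htotf, C1_iff_forall g htot]
  constructor
  · intro h t'
    obtain ⟨t, ht⟩ := exists_L_eq f₀ (expand ι f₀)
      (fun a b => (rk_le_rk_iff hmono hr1 htot a b).symm)
      (fun a => by have := rk_ge_two ((htotf a).1); omega) t'
    rw [ht]; exact h t
  · intro h t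
    obtain ⟨t', ht⟩ := exists_L_eq (expand ι f₀) f₀
      (fun a b => rk_le_rk_iff hmono hr1 htot a b)
      (fun a => by have := rk_ge_two ((htot a).1); omega) t
    rw [ht]; exact h t'

lemma Neg_expand (hmono : StrictMonoOn ι (Set.Icc 1 (k:ℤ)))
    (hr : ∀ j ∈ Set.Icc (1:ℤ) (k:ℤ), 1 ≤ ι j) (htot : Tot k f₀)
    {j₀ : ℤ} (hj₀ : j₀ ∈ Set.Icc (1:ℤ) (k:ℤ)) {i : ℕ} (hi : (i : ℤ) = ι j₀) :
    Neg (expand ι f₀) i = Neg f₀ j₀.toNat := by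
  ext a
  simp only [Neg, Finset.mem_filter, Finset.mem_univ, true_and]
  have h1 : ((j₀.toNat : ℤ)) = j₀ := Int.toNat_of_nonneg (by have := hj₀.1; omega)
  rw [h1, hi]
  exact expand_eq_neg_iff hmono hr htot a hj₀

lemma Aset_expand (hmono : StrictMonoOn ι (Set.Icc 1 (k:ℤ)))
    (hr : ∀ j ∈ Set.Icc (1:ℤ) (k:ℤ), 1 ≤ ι j) (htot : Tot k f₀)
    {j₀ : ℤ} (hj₀ : j₀ ∈ Set.Icc (1:ℤ) (k:ℤ)) {i : ℕ} (hi : (i : ℤ) = ι j₀) :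
    Aset (expand ι f₀) i = Aset f₀ j₀.toNat := by
  have hιj := hr _ hj₀
  have hj₀1 := hj₀.1
  ext a
  simp only [Aset, Finset.mem_filter, Finset.mem_univ, true_and]
  have h1 : ((j₀.toNat : ℤ)) = j₀ := Int.toNat_of_nonneg (by omega)
  rw [h1, hi]
  rw [rk_le_rk_pred_iff ((htot a).1) hj₀1,
    rk_le_rk_pred_iff ?_ (by omega : (1:ℤ) ≤ ι j₀)]
  · exact rk_expand_le_pred_iff hmono hr htot a hj₀
  · -- expand ι f₀ a ≠ 0
    have habs := abs_expand hr htot a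
    have h2 := Int.one_le_abs ((htot a).1)
    have h3 : |f₀ a| ∈ Set.Icc (1:ℤ) (k:ℤ) := ⟨h2, (htot a).2⟩
    have h4 := hr _ h3
    intro hc
    rw [hc] at habs
    simp only [abs_zero] at habs
    omega

lemma Neg_expand_empty (hr : ∀ j ∈ Set.Icc (1:ℤ) (k:ℤ), 1 ≤ ι j) (htot : Tot k f₀)
    {i : ℕ} (hi : 1 ≤ i) (hex : ∀ j ∈ Set.Icc (1:ℤ) (k:ℤ), ι j ≠ (i:ℤ)) :
    Neg (expand ι f₀) i = (∅ : Finset I) := by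
  rw [Finset.eq_empty_iff_forall_notMem]
  intro a ha
  simp only [Neg, Finset.mem_filter, Finset.mem_univ, true_and] at ha
  exact expand_no_neg_fiber hr htot a (by exact_mod_cast hi) hex ha

lemma C2_transfer (hmono : StrictMonoOn ι (Set.Icc 1 (k:ℤ)))
    (hr : ∀ j ∈ Set.Icc (1:ℤ) (k:ℤ), 1 ≤ ι j ∧ ι j ≤ (n:ℤ))
    (htot : Tot k f₀) : C2 g n (expand ι f₀) ↔ C2 g k f₀ := by
  have hr1 : ∀ j ∈ Set.Icc (1:ℤ) (k:ℤ), 1 ≤ ι j := fun j hj => (hr j hj).1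
  constructor
  · intro h j hj1 hjk B hB
    have hj₀ : ((j:ℤ)) ∈ Set.Icc (1:ℤ) (k:ℤ) := ⟨by exact_mod_cast hj1, by exact_mod_cast hjk⟩
    obtain ⟨hι1, hι2⟩ := hr _ hj₀
    set i : ℕ := (ι (j:ℤ)).toNat with hidef
    have hi : (i : ℤ) = ι (j:ℤ) := Int.toNat_of_nonneg (by omega)
    have hNeg := Neg_expand hmono hr1 htot hj₀ hi
    have hAset := Aset_expand hmono hr1 htot hj₀ hi
    rw [Int.toNat_natCast] at hNeg hAset
    rw [← hNeg, ← hAset]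
    apply h i (by omega) (by omega)
    rw [hNeg]; exact hB
  · intro h i hi1 hin B hB
    by_cases hex : ∃ j₀ ∈ Set.Icc (1:ℤ) (k:ℤ), ι j₀ = (i:ℤ)
    · obtain ⟨j₀, hj₀, hij⟩ := hex
      have hi : (i : ℤ) = ι j₀ := hij.symm
      have hNeg := Neg_expand hmono hr1 htot hj₀ hi
      have hAset := Aset_expand hmono hr1 htot hj₀ hi
      rw [hNeg, hAset]
      apply h j₀.toNat (by have := hj₀.1; omega) (by have := hj₀.2; omega)
      rw [← hNeg]; exact hB
    · push_neg at hex
      have hNeg : Neg (expand ι f₀) i = (∅ : Finset I) :=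
        Neg_expand_empty hr1 htot hi1 hex
      rw [hNeg] at hB ⊢
      have hBe : B = ∅ := Finset.subset_empty.mp hB
      rw [hBe, Finset.inter_empty]

lemma enriched_transfer (hmono : StrictMonoOn ι (Set.Icc 1 (k:ℤ)))
    (hr : ∀ j ∈ Set.Icc (1:ℤ) (k:ℤ), 1 ≤ ι j ∧ ι j ≤ (n:ℤ))
    (htot : Tot k f₀) : EnrichedConvex g n (expand ι f₀) ↔ EnrichedConvex g k f₀ := by
  rw [enriched_def, enriched_def, C1_transfer g hmono hr htot, C2_transfer g hmono hr htot]

end relabel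

section compress

variable (f : I → ℤ)

/-- the set of absolute values used by `f` -/
def used : Finset ℤ := Finset.image (fun a => |f a|) Finset.univ

lemma mem_used {f : I → ℤ} {x : ℤ} : x ∈ used f ↔ ∃ a, |f a| = x := by
  simp [used]

lemma used_subset {n : ℕ} {f : I → ℤ} (htot : Tot n f) :
    used f ⊆ Finset.Icc (1:ℤ) (n:ℤ) := by
  intro x hx
  obtain ⟨a, ha⟩ := mem_used.mp hx
  rw [Finset.mem_Icc, ← ha]
  exact ⟨Int.one_le_abs (htot a).1, (htot a).2⟩

/-- the `j`-th smallest element of `s` (`1`-indexed), as a relabeling map -/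
def ιF (s : Finset ℤ) (j : ℤ) : ℤ :=
  if h : 1 ≤ j ∧ j ≤ (s.card : ℤ) then
    ((s.orderIsoOfFin rfl ⟨(j-1).toNat, by omega⟩ : s) : ℤ)
  else j

lemma ιF_eq {s : Finset ℤ} {j : ℤ} (h1 : 1 ≤ j) (h2 : j ≤ (s.card : ℤ)) :
    ιF s j = ((s.orderIsoOfFin rfl ⟨(j-1).toNat, by omega⟩ : s) : ℤ) := by
  rw [ιF, dif_pos ⟨h1, h2⟩]

lemma ιF_mem {s : Finset ℤ} {j : ℤ} (h1 : 1 ≤ j) (h2 : j ≤ (s.card : ℤ)) :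
    ιF s j ∈ s := by
  rw [ιF_eq h1 h2]
  exact (s.orderIsoOfFin rfl ⟨(j-1).toNat, by omega⟩).2

lemma ιF_mono (s : Finset ℤ) : StrictMonoOn (ιF s) (Set.Icc 1 (s.card : ℤ)) := by
  intro x hx y hy hxy
  obtain ⟨hx1, hx2⟩ := hx
  obtain ⟨hy1, hy2⟩ := hy
  rw [ιF_eq hx1 hx2, ιF_eq hy1 hy2]
  have : ((⟨(x-1).toNat, by omega⟩ : Fin s.card)) < ⟨(y-1).toNat, by omega⟩ := by
    rw [Fin.mk_lt_mk]; omega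
  exact Subtype.coe_lt_coe.mpr ((s.orderIsoOfFin rfl).lt_iff_lt.mpr this)

lemma ιF_range {n : ℕ} {s : Finset ℤ} (hs : s ⊆ Finset.Icc (1:ℤ) (n:ℤ)) :
    ∀ j ∈ Set.Icc (1:ℤ) (s.card : ℤ), 1 ≤ ιF s j ∧ ιF s j ≤ (n:ℤ) := by
  intro j hj
  have := hs (ιF_mem hj.1 hj.2)
  rw [Finset.mem_Icc] at this
  exact this

lemma ιF_surj {s : Finset ℤ} {x : ℤ} (hx : x ∈ s) :
    ∃ j ∈ Set.Icc (1:ℤ) (s.card : ℤ), ιF s j = x := by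
  set t := (s.orderIsoOfFin rfl).symm ⟨x, hx⟩ with ht
  refine ⟨(t.val : ℤ) + 1, ⟨by omega, by have := t.isLt; omega⟩, ?_⟩
  rw [ιF_eq (by omega) (by have := t.isLt; omega)]
  have : (⟨((t.val : ℤ) + 1 - 1).toNat, by have := t.isLt; omega⟩ : Fin s.card) = t := by
    apply Fin.ext; simp
  rw [this, ht]
  rw [OrderIso.apply_symm_apply]

/-- index (0-based) of `|f a|` in `used f` -/
def cidx (a : I) : ℕ :=
  (((used f).orderIsoOfFin rfl).symm
    ⟨|f a|, Finset.mem_image_of_mem _ (Finset.mem_univ a)⟩).val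

lemma cidx_lt (a : I) : cidx f a < (used f).card :=
  (((used f).orderIsoOfFin rfl).symm
    ⟨|f a|, Finset.mem_image_of_mem _ (Finset.mem_univ a)⟩).isLt

lemma orderIso_cidx (a : I) :
    (((used f).orderIsoOfFin rfl ⟨cidx f a, cidx_lt f a⟩ : used f) : ℤ) = |f a| := by
  have : (⟨cidx f a, cidx_lt f a⟩ : Fin (used f).card) =
      ((used f).orderIsoOfFin rfl).symm
        ⟨|f a|, Finset.mem_image_of_mem _ (Finset.mem_univ a)⟩ := rfl
  rw [this, OrderIso.apply_symm_apply]

lemma cidx_unique {f : I → ℤ} (a : I) (t : Fin (used f).card)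
    (h : (((used f).orderIsoOfFin rfl t : used f) : ℤ) = |f a|) : cidx f a = t.val := by
  have h2 : (⟨|f a|, Finset.mem_image_of_mem _ (Finset.mem_univ a)⟩ : used f) =
      (used f).orderIsoOfFin rfl t := Subtype.ext h.symm
  unfold cidx
  rw [h2, OrderIso.symm_apply_apply]

/-- compression of `f` to use all values `1, …, (used f).card` -/
def compress (a : I) : ℤ :=
  if 0 < f a then (cidx f a : ℤ) + 1 else -((cidx f a : ℤ) + 1)

lemma compress_tot : Tot (used f).card (compress f) := by
  intro a
  have h := cidx_lt f a
  unfold compress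
  split_ifs with hp
  · constructor
    · omega
    · rw [abs_of_pos (by omega)]; omega
  · constructor
    · omega
    · rw [abs_of_neg (by omega)]; omega

lemma abs_compress (a : I) : |compress f a| = (cidx f a : ℤ) + 1 := by
  unfold compress
  split_ifs with hp
  · rw [abs_of_pos (by omega)]
  · rw [abs_of_neg (by omega)]; ring

lemma expand_compress {n : ℕ} {f : I → ℤ} (htot : Tot n f) :
    expand (ιF (used f)) (compress f) = f := by
  funext a
  have h0 := (htot a).1
  have hlt := cidx_lt f a
  have key : ιF (used f) ((cidx f a : ℤ) + 1) = |f a| := by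
    rw [ιF_eq (by omega) (by omega)]
    have : (⟨((cidx f a : ℤ) + 1 - 1).toNat, by omega⟩ : Fin (used f).card) =
        ⟨cidx f a, hlt⟩ := by apply Fin.ext; simp
    rw [this, orderIso_cidx]
  unfold expand compress
  rcases lt_or_ge 0 (f a) with h | h
  · rw [if_pos h, if_pos (by omega : (0:ℤ) < (cidx f a : ℤ) + 1), key, abs_of_pos h]
  · have hne : f a < 0 := by omega
    rw [if_neg (by omega), if_neg (by omega), neg_neg, key, abs_of_neg hne]
    ring

lemma used_compress : used (compress f) = Finset.Icc (1:ℤ) (((used f).card : ℕ) : ℤ) := by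
  ext x
  rw [mem_used, Finset.mem_Icc]
  constructor
  · rintro ⟨a, ha⟩
    rw [abs_compress] at ha
    have := cidx_lt f a
    omega
  · rintro ⟨h1, h2⟩
    set t : Fin (used f).card := ⟨(x-1).toNat, by omega⟩ with htdef
    have hmem : (((used f).orderIsoOfFin rfl t : used f) : ℤ) ∈ used f :=
      ((used f).orderIsoOfFin rfl t).2
    obtain ⟨a, ha⟩ := mem_used.mp hmem
    have hc : cidx f a = t.val := cidx_unique a t ha.symm
    refine ⟨a, ?_⟩
    rw [abs_compress, hc, htdef]
    simp
    omega

lemma expand_pos_iff {k : ℕ} {ι : ℤ → ℤ} {f₀ : I → ℤ}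
    (hr : ∀ j ∈ Set.Icc (1:ℤ) (k:ℤ), 1 ≤ ι j) (htot : Tot k f₀) (a : I) :
    0 < expand ι f₀ a ↔ 0 < f₀ a := by
  obtain ⟨h0, hk⟩ := htot a
  unfold expand
  rcases lt_or_ge 0 (f₀ a) with h | h
  · rw [if_pos h]
    rw [abs_of_pos h] at hk
    have := hr (f₀ a) ⟨by omega, hk⟩
    constructor <;> intro <;> omega
  · have hltz : f₀ a < 0 := by omega
    rw [if_neg (by omega)]
    rw [abs_of_neg hltz] at hk
    have := hr (-f₀ a) ⟨by omega, hk⟩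
    constructor <;> intro <;> omega

lemma expand_inj {k : ℕ} {ι : ℤ → ℤ} {f₀ f₁ : I → ℤ}
    (hmono : StrictMonoOn ι (Set.Icc 1 (k:ℤ)))
    (hr : ∀ j ∈ Set.Icc (1:ℤ) (k:ℤ), 1 ≤ ι j)
    (htot₀ : Tot k f₀) (htot₁ : Tot k f₁)
    (h : expand ι f₀ = expand ι f₁) : f₀ = f₁ := by
  funext a
  have habs : ι |f₀ a| = ι |f₁ a| := by
    rw [← abs_expand hr htot₀ a, ← abs_expand hr htot₁ a, h]
  have hm₀ : |f₀ a| ∈ Set.Icc (1:ℤ) (k:ℤ) := ⟨Int.one_le_abs (htot₀ a).1, (htot₀ a).2⟩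
  have hm₁ : |f₁ a| ∈ Set.Icc (1:ℤ) (k:ℤ) := ⟨Int.one_le_abs (htot₁ a).1, (htot₁ a).2⟩
  have habs2 : |f₀ a| = |f₁ a| := hmono.injOn hm₀ hm₁ habs
  have hsgn : (0 < f₀ a) ↔ (0 < f₁ a) := by
    rw [← expand_pos_iff hr htot₀ a, ← expand_pos_iff hr htot₁ a, h]
  have h₀ := (htot₀ a).1
  have h₁ := (htot₁ a).1
  rcases lt_or_ge 0 (f₀ a) with hp | hp
  · have hp1 : 0 < f₁ a := hsgn.mp hp
    rw [abs_of_pos hp, abs_of_pos hp1] at habs2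
    exact habs2
  · have hp1 : ¬ (0 < f₁ a) := fun hc => by have := hsgn.mpr hc; omega
    rw [abs_of_nonpos hp, abs_of_nonpos (by omega)] at habs2
    omega

end compress

section counting

variable (g : ConvexGeometry I)

lemma used_expand {n : ℕ} {s : Finset ℤ} (hs : s ⊆ Finset.Icc (1:ℤ) (n:ℤ)) {f₀ : I → ℤ}
    (ht : Tot s.card f₀) (hu : used f₀ = Finset.Icc (1:ℤ) ((s.card : ℕ) : ℤ)) :
    used (expand (ιF s) f₀) = s := by
  have hr1 : ∀ j ∈ Set.Icc (1:ℤ) ((s.card : ℕ) : ℤ), 1 ≤ ιF s j :=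
    fun j hj => ((ιF_range hs) j hj).1
  ext x
  rw [mem_used]
  constructor
  · rintro ⟨a, ha⟩
    rw [abs_expand hr1 ht a] at ha
    rw [← ha]
    exact ιF_mem (Int.one_le_abs (ht a).1) ((ht a).2)
  · intro hx
    obtain ⟨j, hj, hij⟩ := ιF_surj hx
    have hj' : j ∈ used f₀ := by rw [hu, Finset.mem_Icc]; exact ⟨hj.1, hj.2⟩
    obtain ⟨a, ha⟩ := mem_used.mp hj'
    exact ⟨a, by rw [abs_expand hr1 ht a, ha, hij]⟩

/-- normalized enriched convex functions using all of `1, …, k` -/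
def Fiber (k : ℕ) : Type _ :=
  {f₀ : I → ℤ // (Tot k f₀ ∧ EnrichedConvex g k f₀) ∧
      used f₀ = Finset.Icc (1:ℤ) (k:ℤ)}

instance fiberFinite (k : ℕ) : Finite (Fiber g k) := by
  apply Finite.of_injective
    (β := I → (Finset.Icc (-(k:ℤ)) (k:ℤ)))
    (fun F => fun a => ⟨F.1 a, by
      have h := (F.2.1.1 a).2
      obtain ⟨h1, h2⟩ := abs_le.mp h
      rw [Finset.mem_Icc]
      exact ⟨h1, h2⟩⟩)
  intro F G h
  apply Subtype.ext; funext a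
  exact congrArg Subtype.val (congrFun h a)

instance validFinite (n : ℕ) :
    Finite {f : I → ℤ // (∀ x, f x ≠ 0 ∧ |f x| ≤ (n:ℤ)) ∧ EnrichedConvex g n f} := by
  apply Finite.of_injective
    (β := I → (Finset.Icc (-(n:ℤ)) (n:ℤ)))
    (fun F => fun a => ⟨F.1 a, by
      have h := (F.2.1 a).2
      obtain ⟨h1, h2⟩ := abs_le.mp h
      rw [Finset.mem_Icc]
      exact ⟨h1, h2⟩⟩)
  intro F G h
  apply Subtype.ext; funext a
  exact congrArg Subtype.val (congrFun h a)

lemma sigma_helper {n : ℕ} (s s' : {s : Finset ℤ // s ∈ (Finset.Icc (1:ℤ) (n:ℤ)).powerset})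
    (F : Fiber g s.1.card) (F' : Fiber g s'.1.card) (h : s.1 = s'.1) (h2 : F.1 = F'.1) :
    (⟨s, F⟩ : Σ s : {s : Finset ℤ // s ∈ (Finset.Icc (1:ℤ) (n:ℤ)).powerset},
      Fiber g s.1.card) = ⟨s', F'⟩ := by
  obtain ⟨sv, hs⟩ := s
  obtain ⟨sv', hs'⟩ := s'
  simp only at h
  subst h
  congr 1
  exact Subtype.ext h2

noncomputable def theEquiv (n : ℕ) :
    {f : I → ℤ // (∀ x, f x ≠ 0 ∧ |f x| ≤ (n:ℤ)) ∧ EnrichedConvex g n f} ≃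
    Σ s : {s : Finset ℤ // s ∈ (Finset.Icc (1:ℤ) (n:ℤ)).powerset}, Fiber g s.1.card where
  toFun F := by
    obtain ⟨f, htot, henr⟩ := F
    have htot' : Tot n f := htot
    have hsub : used f ⊆ Finset.Icc (1:ℤ) (n:ℤ) := used_subset htot'
    refine ⟨⟨used f, Finset.mem_powerset.mpr hsub⟩,
      ⟨compress f, ⟨⟨compress_tot f, ?_⟩, used_compress f⟩⟩⟩
    exact (enriched_transfer g (ιF_mono (used f)) (ιF_range hsub) (compress_tot f)).mp
      (by rw [expand_compress htot']; exact henr)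
  invFun S := by
    obtain ⟨⟨s, hs⟩, ⟨f₀, ⟨⟨ht, he⟩, hu⟩⟩⟩ := S
    have hsub : s ⊆ Finset.Icc (1:ℤ) (n:ℤ) := Finset.mem_powerset.mp hs
    exact ⟨expand (ιF s) f₀, expand_tot (ιF_range hsub) ht,
      (enriched_transfer g (ιF_mono s) (ιF_range hsub) ht).mpr he⟩
  left_inv := by
    rintro ⟨f, htot, henr⟩
    apply Subtype.ext
    exact expand_compress (htot : Tot n f)
  right_inv := by
    rintro ⟨⟨s, hs⟩, ⟨f₀, ⟨⟨ht, he⟩, hu⟩⟩⟩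
    have hsub : s ⊆ Finset.Icc (1:ℤ) (n:ℤ) := Finset.mem_powerset.mp hs
    set e := expand (ιF s) f₀ with hedef
    have hetot : Tot n e := expand_tot (ιF_range hsub) ht
    have hue : used e = s := used_expand hsub ht hu
    have hce : compress e = f₀ := by
      have h1 : expand (ιF (used e)) (compress e) = e := expand_compress hetot
      rw [hue] at h1
      have hct : Tot s.card (compress e) := by
        have := compress_tot e
        rwa [hue] at this
      exact expand_inj (ιF_mono s) (fun j hj => ((ιF_range hsub) j hj).1) hct ht h1
    apply sigma_helper
    · exact hue
    · exact hce

lemma card_eq (n : ℕ) :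
    Nat.card {f : I → ℤ // (∀ x, f x ≠ 0 ∧ |f x| ≤ (n:ℤ)) ∧ EnrichedConvex g n f} =
      ∑ s ∈ (Finset.Icc (1:ℤ) (n:ℤ)).powerset, Nat.card (Fiber g s.card) := by
  classical
  rw [Nat.card_congr (theEquiv g n)]
  haveI : ∀ s : {s : Finset ℤ // s ∈ (Finset.Icc (1:ℤ) (n:ℤ)).powerset},
      Fintype (Fiber g s.1.card) := fun s => Fintype.ofFinite _
  rw [Nat.card_eq_fintype_card, Fintype.card_sigma]
  rw [← Finset.sum_coe_sort ((Finset.Icc (1:ℤ) (n:ℤ)).powerset)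
    (fun s => Nat.card (Fiber g s.card))]
  congr 1
  funext s
  rw [Nat.card_eq_fintype_card]

lemma fiber_card_zero {k : ℕ} (h : Fintype.card I < k) : Nat.card (Fiber g k) = 0 := by
  haveI : IsEmpty (Fiber g k) := by
    constructor
    rintro ⟨f₀, ⟨_, hu⟩⟩
    have h1 : (used f₀).card ≤ Fintype.card I := by
      calc (used f₀).card ≤ Finset.univ.card := Finset.card_image_le
        _ = Fintype.card I := Finset.card_univ
    rw [hu] at h1
    rw [Int.card_Icc] at h1
    omega
  exact Nat.card_of_isEmpty

lemma card_eq_sum_choose (n : ℕ) :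
    Nat.card {f : I → ℤ // (∀ x, f x ≠ 0 ∧ |f x| ≤ (n:ℤ)) ∧ EnrichedConvex g n f} =
      ∑ m ∈ Finset.range (Fintype.card I + 1),
        n.choose m * Nat.card (Fiber g m) := by
  classical
  rw [card_eq]
  have h1 := Finset.sum_powerset_apply_card (fun m => Nat.card (Fiber g m))
    (x := Finset.Icc (1:ℤ) (n:ℤ))
  have hc : (Finset.Icc (1:ℤ) (n:ℤ)).card = n := by
    rw [Int.card_Icc]; omega
  rw [h1, hc]
  -- now: ∑ m in range (n+1), n.choose m • E m = ∑ m in range (c+1), n.choose m * E m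
  have hzero : ∀ N, n ≤ N → Fintype.card I ≤ N →
      (∑ m ∈ Finset.range (N + 1), n.choose m * Nat.card (Fiber g m)) =
      ∑ m ∈ Finset.range (n + 1), n.choose m * Nat.card (Fiber g m) := by
    intro N hN _
    symm
    apply Finset.sum_subset
    · exact Finset.range_subset_range.mpr (by omega)
    · intro m _ hm
      rw [Finset.mem_range, not_lt] at hm
      rw [Nat.choose_eq_zero_of_lt (by omega), zero_mul]
  have hzero' : ∀ N, n ≤ N → Fintype.card I ≤ N →
      (∑ m ∈ Finset.range (N + 1), n.choose m * Nat.card (Fiber g m)) =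
      ∑ m ∈ Finset.range (Fintype.card I + 1), n.choose m * Nat.card (Fiber g m) := by
    intro N _ hN
    symm
    apply Finset.sum_subset
    · exact Finset.range_subset_range.mpr (by omega)
    · intro m _ hm
      rw [Finset.mem_range, not_lt] at hm
      rw [fiber_card_zero g (by omega), mul_zero]
  have key := (hzero (max n (Fintype.card I)) (le_max_left _ _) (le_max_right _ _)).symm.trans
    (hzero' (max n (Fintype.card I)) (le_max_left _ _) (le_max_right _ _))
  rw [← key]
  simp [smul_eq_mul]

end counting

end Stmt8

/-- there is a polynomial `P ∈ ℚ[X]` such that `P(n)` counts the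
enriched convex functions `f : I → ⟦n⟧` for every `n ≥ 1`. -/
theorem stmt_8 (g : ConvexGeometry I) :
    ∃ P : Polynomial ℚ, ∀ n : ℕ, 1 ≤ n →
      P.eval (n : ℚ) =
        Nat.card {f : I → ℤ //
          (∀ x, f x ≠ 0 ∧ |f x| ≤ (n : ℤ)) ∧ EnrichedConvex g n f} := by
  classical
  refine ⟨∑ m ∈ Finset.range (Fintype.card I + 1),
    Polynomial.C ((Nat.card (Stmt8.Fiber g m) : ℚ) / m.factorial) * descPochhammer ℚ m, ?_⟩
  intro n hn
  rw [Stmt8.card_eq_sum_choose g n]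
  push_cast
  rw [Polynomial.eval_finset_sum]
  apply Finset.sum_congr rfl
  intro m hm
  rw [Polynomial.eval_mul, Polynomial.eval_C, descPochhammer_eval_eq_descFactorial,
    Nat.descFactorial_eq_factorial_mul_choose]
  have hfac : (m.factorial : ℚ) ≠ 0 := Nat.cast_ne_zero.mpr (Nat.factorial_ne_zero m)
  push_cast
  field_simp
end

section
/- Let g be a convex geometry on a finite set I, let n ≥ 1 be an integer, and let f : I → ⟦n⟧. Then f is enriched extremal if and only if both of the following hold: (a) for every m ∈ {1,…,n}, the set f^{-1}({y ∈ ⟦n⟧ : −m ⊑ y}) is convex; and (b) for every a ∈ I and m ∈ {1,…,n} with f(a) = −m, the set f^{-1}({y ∈ ⟦n⟧ : −m ⊑ y}) \ {a} is convex. -/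
variable {I : Type*} [DecidableEq I] [Fintype I]

/-- `f : I → ⟦n⟧` (realized as nonzero integers) is enriched extremal w.r.t. `g`:
(1) every nonempty convex set `A` has an extreme point attaining the
`⊑`-minimum of `f` on `A`; (2) every `a` with `f a` negative is an extreme
point of `{b : f a ⊑ f b}`. -/
def EnrichedExtremal (g : ConvexGeometry I) (f : I → ℤ) : Prop :=
  (∀ A : Finset I, g.cl A = A → A.Nonempty →
    ∃ a ∈ A, a ∉ g.cl (A.erase a) ∧ ∀ b ∈ A, rk (f a) ≤ rk (f b)) ∧
  (∀ a : I, f a < 0 →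
    a ∉ g.cl ((Finset.univ.filter fun b => rk (f a) ≤ rk (f b)).erase a))

lemma rk_neg_nat (m : ℕ) : rk (-(m : ℤ)) = 2 * m := by
  rw [rk, abs_neg, Int.abs_natCast, if_neg (by omega)]
  ring

lemma rk_pos_eq (x : ℤ) (h : 0 < x) : rk x = 2 * x + 1 := by
  rw [rk, abs_of_pos h, if_pos h]

lemma rk_le_bound (x : ℤ) : rk x ≤ 2 * |x| + 1 := by
  rw [rk]; split_ifs <;> linarith

/-- One-step extension: between two nested distinct convex sets `K ⊊ A` there is a
point `c ∈ A \ K` with `K ∪ {c}` convex. -/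
lemma cg_step (g : ConvexGeometry I) (A K : Finset I) (hA : g.cl A = A)
    (hK : g.cl K = K) (hKA : K ⊆ A) :
    ∀ (N : ℕ) (a : I), (g.cl (insert a K)).card ≤ N → a ∈ A → a ∉ K →
      ∃ c ∈ A, c ∉ K ∧ g.cl (insert c K) = insert c K := by
  intro N
  induction N with
  | zero =>
      intro a hcard ha haK
      exfalso
      have h1 : a ∈ g.cl (insert a K) := g.subset_cl _ (Finset.mem_insert_self a K)
      have h2 := Finset.card_pos.mpr ⟨a, h1⟩
      omega
  | succ N ih =>
      intro a hcard ha haK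
      by_cases h : g.cl (insert a K) = insert a K
      · exact ⟨a, ha, haK, h⟩
      · have hsub : insert a K ⊆ g.cl (insert a K) := g.subset_cl _
        have hne : ¬ g.cl (insert a K) ⊆ insert a K :=
          fun hc => h (Finset.Subset.antisymm hc hsub)
        obtain ⟨b, hb, hbn⟩ := Finset.not_subset.mp hne
        have hbA : b ∈ A := by
          have hs : g.cl (insert a K) ⊆ A := by
            rw [← hA]; exact g.mono (Finset.insert_subset ha hKA)
          exact hs hb
        have hba : b ≠ a := fun e => hbn (e ▸ Finset.mem_insert_self a K)
        have hbK : b ∉ K := fun e => hbn (Finset.mem_insert_of_mem e)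
        have hbclK : b ∉ g.cl K := by rw [hK]; exact hbK
        have haclK : a ∉ g.cl K := by rw [hK]; exact haK
        have hnotin : a ∉ g.cl (insert b K) := g.antiExchange K b a hba hbclK haclK hb
        have hsub2 : g.cl (insert b K) ⊆ g.cl (insert a K) := by
          have h1 : insert b K ⊆ g.cl (insert a K) :=
            Finset.insert_subset hb ((Finset.subset_insert a K).trans hsub)
          have h2 := g.mono h1
          rwa [g.idem] at h2
        have hlt : (g.cl (insert b K)).card < (g.cl (insert a K)).card := by
          apply Finset.card_lt_card
          refine Finset.ssubset_def.mpr ⟨hsub2, fun hc => hnotin (hc ?_)⟩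
          exact g.subset_cl _ (Finset.mem_insert_self a K)
        exact ih b (by omega) hbA hbK

/-- Given nested convex sets `K ⊊ A`, `A` has an extreme point outside `K`. -/
lemma cg_exists_extreme (g : ConvexGeometry I) :
    ∀ (N : ℕ) (A K : Finset I), (A \ K).card ≤ N → g.cl A = A → g.cl K = K →
      K ⊆ A → (∃ x ∈ A, x ∉ K) →
      ∃ a ∈ A, a ∉ K ∧ a ∉ g.cl (A.erase a) := by
  intro N
  induction N with
  | zero =>
      rintro A K hcard _ _ _ ⟨x, hxA, hxK⟩
      exfalso
      have h1 : x ∈ A \ K := Finset.mem_sdiff.mpr ⟨hxA, hxK⟩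
      have h2 := Finset.card_pos.mpr ⟨x, h1⟩
      omega
  | succ N ih =>
      rintro A K hcard hA hK hKA ⟨x, hxA, hxK⟩
      obtain ⟨c, hcA, hcK, hcConv⟩ :=
        cg_step g A K hA hK hKA ((g.cl (insert x K)).card) x le_rfl hxA hxK
      by_cases hAll : ∀ y ∈ A, y ∈ insert c K
      · have hAeq : A = insert c K :=
          Finset.Subset.antisymm (fun y hy => hAll y hy) (Finset.insert_subset hcA hKA)
        refine ⟨c, hcA, hcK, ?_⟩
        have herase : A.erase c = K := by rw [hAeq, Finset.erase_insert hcK]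
        rw [herase, hK]; exact hcK
      · push_neg at hAll
        obtain ⟨y, hyA, hyK'⟩ := hAll
        have hcard' : (A \ insert c K).card ≤ N := by
          have h1 : A \ insert c K = (A \ K).erase c := by
            ext z
            simp only [Finset.mem_sdiff, Finset.mem_insert, Finset.mem_erase]
            tauto
          have hcmem : c ∈ A \ K := Finset.mem_sdiff.mpr ⟨hcA, hcK⟩
          have h2 := Finset.card_pos.mpr ⟨c, hcmem⟩
          rw [h1, Finset.card_erase_of_mem hcmem]
          omega
        obtain ⟨a, haA, haK', haEx⟩ :=
          ih A (insert c K) hcard' hA hcConv (Finset.insert_subset hcA hKA) ⟨y, hyA, hyK'⟩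
        exact ⟨a, haA, fun hh => haK' (Finset.mem_insert_of_mem hh), haEx⟩

/-- `f : I → ⟦n⟧` is enriched extremal iff
(a) for every `m ∈ {1,…,n}` the set `f⁻¹({y : −m ⊑ y})` is convex, and
(b) for every `a` with `f a = −m`, the set `f⁻¹({y : −m ⊑ y}) \ {a}` is convex. -/
theorem stmt_10 (g : ConvexGeometry I) (n : ℕ) (hn : 1 ≤ n) (f : I → ℤ)
    (hf : ∀ x, f x ≠ 0 ∧ |f x| ≤ (n : ℤ))
    (U : ℕ → Finset I)
    (hU : ∀ m, U m = Finset.univ.filter fun b => rk (-(m : ℤ)) ≤ rk (f b)) :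
    EnrichedExtremal g f ↔
      ((∀ m : ℕ, 1 ≤ m → m ≤ n → g.cl (U m) = U m) ∧
        ∀ (a : I) (m : ℕ), 1 ≤ m → m ≤ n → f a = -(m : ℤ) →
          g.cl ((U m).erase a) = (U m).erase a) := by
  have hUmem : ∀ (m : ℕ) (b : I), b ∈ U m ↔ rk (-(m : ℤ)) ≤ rk (f b) := by
    intro m b; rw [hU]; simp
  constructor
  · rintro ⟨h1, h2⟩
    have hconvA : ∀ m : ℕ, 1 ≤ m → m ≤ n → g.cl (U m) = U m := by
      intro m hm1 hmn
      rcases Finset.eq_empty_or_nonempty (U m) with he | hne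
      · rw [he, g.loopless]
      · have hAconv : g.cl (g.cl (U m)) = g.cl (U m) := g.idem _
        have hAne : (g.cl (U m)).Nonempty := hne.mono (g.subset_cl _)
        obtain ⟨a, haA, haEx, hamin⟩ := h1 (g.cl (U m)) hAconv hAne
        refine Finset.Subset.antisymm ?_ (g.subset_cl _)
        intro b hbA
        by_contra hbU
        have haU : a ∉ U m := by
          rw [hUmem] at hbU ⊢
          have := hamin b hbA
          linarith
        have hsub : U m ⊆ (g.cl (U m)).erase a := fun x hx =>
          Finset.mem_erase.mpr ⟨fun e => haU (e ▸ hx), g.subset_cl _ hx⟩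
        exact haEx (g.mono hsub haA)
    refine ⟨hconvA, ?_⟩
    intro a m hm1 hmn hfa
    have hneg : f a < 0 := by
      rw [hfa]
      have : (1 : ℤ) ≤ (m : ℤ) := by exact_mod_cast hm1
      omega
    have hset : (Finset.univ.filter fun b => rk (f a) ≤ rk (f b)) = U m := by
      rw [hU, hfa]
    have h2a := h2 a hneg
    rw [hset] at h2a
    refine Finset.Subset.antisymm ?_ (g.subset_cl _)
    have hclsub : g.cl ((U m).erase a) ⊆ U m := by
      have h := g.mono (Finset.erase_subset a (U m))
      rwa [hconvA m hm1 hmn] at h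
    intro x hx
    exact Finset.mem_erase.mpr ⟨fun e => h2a (e ▸ hx), hclsub hx⟩
  · rintro ⟨hconv, hberase⟩
    constructor
    · intro A hA hAne
      obtain ⟨a0, ha0, hmin⟩ := Finset.exists_min_image A (fun b => rk (f b)) hAne
      obtain ⟨hf0, hfabs⟩ := hf a0
      rcases lt_or_gt_of_ne hf0 with hneg | hpos
      · -- minimum value is negative
        set m := (-f a0).toNat with hm
        have hfa0 : f a0 = -(m : ℤ) := by
          rw [hm, Int.toNat_of_nonneg (by omega)]; ring
        have hm1 : 1 ≤ m := by omega
        have hmn : m ≤ n := by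
          have : |f a0| ≤ (n : ℤ) := hfabs
          rw [abs_of_neg hneg] at this
          omega
        refine ⟨a0, ha0, ?_, hmin⟩
        have hsubU : A ⊆ U m := by
          intro b hbA
          rw [hUmem, ← hfa0]
          exact hmin b hbA
        have hclsub : g.cl (A.erase a0) ⊆ (U m).erase a0 := by
          rw [← hberase a0 m hm1 hmn hfa0]
          exact g.mono (Finset.erase_subset_erase _ hsubU)
        exact fun hx => (Finset.mem_erase.mp (hclsub hx)).1 rfl
      · -- minimum value is positive
        set p := (f a0).toNat with hp
        have hfa0 : f a0 = (p : ℤ) := by rw [hp, Int.toNat_of_nonneg (by omega)]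
        have hp1 : 1 ≤ p := by omega
        have hpn : p ≤ n := by
          have : |f a0| ≤ (n : ℤ) := hfabs
          rw [abs_of_pos hpos] at this
          omega
        have hrka0 : rk (f a0) = 2 * (p : ℤ) + 1 := by
          rw [hfa0, rk_pos_eq _ (by exact_mod_cast hp1)]
        set D := A.filter (fun b => rk (f a0) < rk (f b)) with hD
        have hDA : D ⊆ A := Finset.filter_subset _ _
        have hDconv : g.cl D = D := by
          rcases eq_or_lt_of_le hpn with heq | hlt
          · have hDe : D = ∅ := by
              rw [hD]
              apply Finset.filter_false_of_mem
              intro b hbA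
              have h1 := rk_le_bound (f b)
              have h2 : |f b| ≤ (n : ℤ) := (hf b).2
              rw [hrka0, heq]
              push_cast
              linarith
            rw [hDe, g.loopless]
          · have hq1 : 1 ≤ p + 1 := by omega
            have hqn : p + 1 ≤ n := hlt
            have hDU : D ⊆ U (p + 1) := by
              intro b hbD
              obtain ⟨hbA, hbr⟩ := Finset.mem_filter.mp hbD
              rw [hUmem, rk_neg_nat]
              rw [hrka0] at hbr
              push_cast
              omega
            refine Finset.Subset.antisymm ?_ (g.subset_cl _)
            intro x hx
            have hxA : x ∈ A := by
              rw [← hA]; exact g.mono hDA hx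
            have hxU : x ∈ U (p + 1) := by
              rw [← hconv (p + 1) hq1 hqn]; exact g.mono hDU hx
            refine Finset.mem_filter.mpr ⟨hxA, ?_⟩
            have hxr := (hUmem (p + 1) x).mp hxU
            rw [rk_neg_nat] at hxr
            rw [hrka0]
            push_cast at hxr
            omega
        have ha0D : a0 ∉ D := by
          rw [hD, Finset.mem_filter]
          exact fun h => lt_irrefl _ h.2
        obtain ⟨a, haA, haD, haEx⟩ :=
          cg_exists_extreme g ((A \ D).card) A D le_rfl hA hDconv hDA ⟨a0, ha0, ha0D⟩
        refine ⟨a, haA, haEx, ?_⟩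
        intro b hbA
        have h1 : ¬ rk (f a0) < rk (f a) := fun h => haD (Finset.mem_filter.mpr ⟨haA, h⟩)
        have h2 := hmin b hbA
        have h3 := hmin a haA
        linarith
    · intro a hfa
      obtain ⟨hf0, hfabs⟩ := hf a
      set m := (-f a).toNat with hm
      have hfa0 : f a = -(m : ℤ) := by
        rw [hm, Int.toNat_of_nonneg (by omega)]; ring
      have hm1 : 1 ≤ m := by omega
      have hmn : m ≤ n := by
        rw [abs_of_neg hfa] at hfabs
        omega
      have hset : (Finset.univ.filter fun b => rk (f a) ≤ rk (f b)) = U m := by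
        rw [hU, hfa0]
      rw [hset, hberase a m hm1 hmn hfa0]
      simp
end

section
/- Let g be a convex geometry on a finite set I. Then there exists a polynomial P ∈ ℚ[X] such that for every integer n ≥ 1, P(n) equals the number of enriched extremal functions f : I → ⟦n⟧. -/
variable {I : Type*} [DecidableEq I] [Fintype I]

open Finset Function
open scoped Classical

/-- The "pattern" version of `EnrichedExtremal`, depending only on an abstract
comparison relation and a negativity predicate. -/
def Pat (g : ConvexGeometry I) (le : I → I → Prop) (neg : I → Prop) : Prop :=
  (∀ A : Finset I, g.cl A = A → A.Nonempty →
    ∃ a ∈ A, a ∉ g.cl (A.erase a) ∧ ∀ b ∈ A, le a b) ∧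
  (∀ a : I, neg a → a ∉ g.cl ((Finset.univ.filter fun b => le a b).erase a))

lemma pat_congr {g : ConvexGeometry I} {le le' : I → I → Prop} {neg neg' : I → Prop}
    (h1 : ∀ a b, le a b ↔ le' a b) (h2 : ∀ a, neg a ↔ neg' a) :
    Pat g le neg ↔ Pat g le' neg' := by
  obtain rfl : le = le' := funext fun a => funext fun b => propext (h1 a b)
  obtain rfl : neg = neg' := funext fun a => propext (h2 a)
  rfl

lemma ee_iff_pat {g : ConvexGeometry I} {f : I → ℤ} {le : I → I → Prop} {neg : I → Prop}
    (h1 : ∀ a b, (rk (f a) ≤ rk (f b)) ↔ le a b) (h2 : ∀ a, (f a < 0) ↔ neg a) :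
    EnrichedExtremal g f ↔ Pat g le neg := by
  have hfil : ∀ a : I, (Finset.univ.filter fun b => rk (f a) ≤ rk (f b)) =
      Finset.univ.filter fun b => le a b := fun a =>
    Finset.filter_congr fun b _ => h1 a b
  constructor
  · rintro ⟨hA, hN⟩
    refine ⟨fun A hcl hne => ?_, fun a ha => ?_⟩
    · obtain ⟨a, haA, hex, hmin⟩ := hA A hcl hne
      exact ⟨a, haA, hex, fun b hb => (h1 a b).1 (hmin b hb)⟩
    · have := hN a ((h2 a).2 ha)
      rwa [hfil a] at this
  · rintro ⟨hA, hN⟩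
    refine ⟨fun A hcl hne => ?_, fun a ha => ?_⟩
    · obtain ⟨a, haA, hex, hmin⟩ := hA A hcl hne
      exact ⟨a, haA, hex, fun b hb => (h1 a b).2 (hmin b hb)⟩
    · have := hN a ((h2 a).1 ha)
      rwa [hfil a]

/-- The comparison pattern induced by a "magnitude" function `u` and
a "sign" function `s` (lexicographic, with `false < true`). -/
def pleq {α : Type*} [LinearOrder α] (u : I → α) (s : I → Bool) (a b : I) : Prop :=
  u a < u b ∨ (u a = u b ∧ s a ≤ s b)

def pneg (s : I → Bool) (a : I) : Prop := s a = false

lemma pleq_comp {α β : Type*} [LinearOrder α] [LinearOrder β] {ι : α → β}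
    (hι : StrictMono ι) (u : I → α) (s : I → Bool) (a b : I) :
    pleq (fun x => ι (u x)) s a b ↔ pleq u s a b := by
  unfold pleq
  rw [hι.lt_iff_lt, hι.injective.eq_iff]

/-- The function `I → ⟦n⟧` encoded by a sign function and a magnitude function. -/
def toF {n : ℕ} (s : I → Bool) (u : I → Fin n) (a : I) : ℤ :=
  if s a then ((u a : ℤ) + 1) else -((u a : ℤ) + 1)

lemma rk_toF {n : ℕ} (s : I → Bool) (u : I → Fin n) (a : I) :
    rk (toF s u a) = 2 * ((u a : ℤ) + 1) + (if s a then 1 else 0) := by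
  have h : (0 : ℤ) ≤ (u a : ℤ) := Int.natCast_nonneg _
  unfold toF rk
  split_ifs with hs hpos hpos
  · rw [abs_of_pos hpos]
  · exact absurd (by omega : (0 : ℤ) < (u a : ℤ) + 1) hpos
  · exact absurd hpos (by omega)
  · rw [abs_of_neg (by omega : -((u a : ℤ) + 1) < 0)]
    ring

lemma toF_neg_iff {n : ℕ} (s : I → Bool) (u : I → Fin n) (a : I) :
    toF s u a < 0 ↔ pneg s a := by
  have h : (0 : ℤ) ≤ (u a : ℤ) := Int.natCast_nonneg _
  unfold toF pneg
  cases hs : s a <;> simp <;> omega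

lemma rk_toF_le_iff {n : ℕ} (s : I → Bool) (u : I → Fin n) (a b : I) :
    rk (toF s u a) ≤ rk (toF s u b) ↔ pleq u s a b := by
  rw [rk_toF, rk_toF]
  unfold pleq
  rw [Fin.lt_def, Fin.ext_iff]
  have ha : ((u a : ℤ)) = (((u a : ℕ) : ℤ)) := rfl
  have hb : ((u b : ℤ)) = (((u b : ℕ) : ℤ)) := rfl
  rw [ha, hb]
  cases hsa : s a <;> cases hsb : s b <;>
    simp only [if_true, if_false, Bool.le_true, Bool.false_le, le_refl,
      show ¬((true : Bool) ≤ false) by decide, and_true, and_false, or_false,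
      Bool.false_eq_true, ite_true, ite_false] <;>
    omega

lemma ee_toF_iff {n : ℕ} (g : ConvexGeometry I) (s : I → Bool) (u : I → Fin n) :
    EnrichedExtremal g (toF s u) ↔ Pat g (pleq u s) (pneg s) :=
  ee_iff_pat (rk_toF_le_iff s u) (toF_neg_iff s u)

/-- admissibility -/
def Adm (n : ℕ) (f : I → ℤ) : Prop := ∀ x, f x ≠ 0 ∧ |f x| ≤ (n : ℤ)

lemma adm_toF {n : ℕ} (s : I → Bool) (u : I → Fin n) : Adm n (toF s u) := by
  intro x
  have h1 : (0 : ℤ) ≤ (u x : ℤ) := Int.natCast_nonneg _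
  have h2 : (u x : ℤ) < n := by exact_mod_cast (u x).2
  unfold toF
  split_ifs <;> constructor <;> simp [abs] <;> omega

/-- The basic encoding: admissible functions correspond to pairs (sign, magnitude). -/
noncomputable def admEquiv (n : ℕ) : {f : I → ℤ // Adm n f} ≃ ((I → Bool) × (I → Fin n)) where
  toFun x :=
    ⟨fun a => decide (0 < x.1 a), fun a => ⟨(x.1 a).natAbs - 1, by
      have h1 := (x.2 a).1
      have h2 := (x.2 a).2
      have h3 : ((x.1 a).natAbs : ℤ) = |x.1 a| := (Int.abs_eq_natAbs _).symm
      omega⟩⟩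
  invFun p := ⟨toF p.1 p.2, adm_toF p.1 p.2⟩
  left_inv x := by
    apply Subtype.ext
    funext a
    have h1 := (x.2 a).1
    have h2 := (x.2 a).2
    simp only [toF]
    split_ifs with h
    · simp only [decide_eq_true_eq] at h
      omega
    · simp only [decide_eq_true_eq] at h
      omega
  right_inv p := by
    refine Prod.ext (funext fun a => ?_) (funext fun a => ?_)
    · have h1 : (0 : ℤ) ≤ (p.2 a : ℤ) := Int.natCast_nonneg _
      simp only [toF]
      rcases Bool.eq_false_or_eq_true (p.1 a) with hs | hs <;>
        simp only [hs, if_true, if_false, Bool.false_eq_true, ite_true, ite_false,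
          decide_eq_false_iff_not, decide_eq_true_eq, not_lt] <;>
        omega
    · apply Fin.ext
      have h1 : (0 : ℤ) ≤ (p.2 a : ℤ) := Int.natCast_nonneg _
      have h2 : ((p.2 a : ℕ) : ℤ) = (p.2 a : ℤ) := rfl
      simp only [toF]
      rcases Bool.eq_false_or_eq_true (p.1 a) with hs | hs <;>
        simp only [hs, if_true, if_false, Bool.false_eq_true, ite_true, ite_false] <;>
        omega

/-- `patCount g s k` : number of surjective magnitude patterns with `k` levels. -/
noncomputable def patCount (g : ConvexGeometry I) (s : I → Bool) (k : ℕ) : ℕ :=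
  Nat.card {w : I → Fin k // Surjective w ∧ Pat g (pleq w s) (pneg s)}

lemma patCount_eq_zero (g : ConvexGeometry I) (s : I → Bool) {k : ℕ}
    (hk : Fintype.card I < k) : patCount g s k = 0 := by
  have : IsEmpty {w : I → Fin k // Surjective w ∧ Pat g (pleq w s) (pneg s)} := by
    constructor
    rintro ⟨w, hw, -⟩
    have := Fintype.card_le_of_surjective w hw
    simp only [Fintype.card_fin] at this
    omega
  simp [patCount, Nat.card_of_isEmpty]

lemma natCard_sigma {ι : Type*} [Fintype ι] (f : ι → Type*) [∀ i, Finite (f i)] :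
    Nat.card (Σ i, f i) = ∑ i, Nat.card (f i) := by
  have h : ∀ i, Fintype (f i) := fun i => Fintype.ofFinite _
  haveI := h
  rw [Nat.card_eq_fintype_card, Fintype.card_sigma]
  exact Finset.sum_congr rfl fun i _ => (Nat.card_eq_fintype_card).symm

/-- Fibered counting over the image of `u`. -/
noncomputable def fiberEquiv (g : ConvexGeometry I) (s : I → Bool) {n : ℕ}
    (B : Finset (Fin n)) :
    {x : {u : I → Fin n // Pat g (pleq u s) (pneg s)} // Finset.image x.1 Finset.univ = B} ≃
    {w : I → Fin B.card // Surjective w ∧ Pat g (pleq w s) (pneg s)} := by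
  set iso := B.orderIsoOfFin rfl with hiso
  have hι : StrictMono (fun j : Fin B.card => ((iso j : {x // x ∈ B}) : Fin n)) :=
    fun a b h => by exact_mod_cast iso.strictMono h
  have hmem : ∀ (u : I → Fin n), Finset.image u Finset.univ = B → ∀ a, u a ∈ B :=
    fun u h a => h ▸ Finset.mem_image_of_mem u (Finset.mem_univ a)
  refine
    { toFun := fun x =>
        ⟨fun a => iso.symm ⟨x.1.1 a, hmem x.1.1 x.2 a⟩, ?_, ?_⟩
      invFun := fun w => ⟨⟨fun a => ((iso (w.1 a) : {x // x ∈ B}) : Fin n), ?_⟩, ?_⟩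
      left_inv := ?_
      right_inv := ?_ }
  · -- surjectivity
    intro j
    have hj : ((iso j : {x // x ∈ B}) : Fin n) ∈ Finset.image x.1.1 Finset.univ := by
      rw [x.2]; exact (iso j).2
    obtain ⟨a, -, ha⟩ := Finset.mem_image.1 hj
    refine ⟨a, ?_⟩
    have h2 : (⟨x.1.1 a, hmem x.1.1 x.2 a⟩ : {x // x ∈ B}) = iso j := Subtype.ext ha
    exact (congrArg iso.symm h2).trans (OrderIso.symm_apply_apply iso j)
  · -- Pat for w
    have hu : x.1.1 = fun a =>
        ((iso ((fun a => iso.symm ⟨x.1.1 a, hmem x.1.1 x.2 a⟩) a) : {x // x ∈ B}) : Fin n) := by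
      funext a
      rw [OrderIso.apply_symm_apply]
    have hp := x.1.2
    rw [hu] at hp
    exact (pat_congr (pleq_comp hι _ s) (fun a => Iff.rfl)).1 hp
  · -- Pat for u from w
    exact (pat_congr (pleq_comp hι _ s) (fun a => Iff.rfl)).2 w.2.2
  · -- image = B
    ext b
    simp only [Finset.mem_image, Finset.mem_univ, true_and]
    constructor
    · rintro ⟨a, rfl⟩; exact (iso (w.1 a)).2
    · intro hb
      obtain ⟨a, ha⟩ := w.2.1 (iso.symm ⟨b, hb⟩)
      exact ⟨a, by rw [ha, OrderIso.apply_symm_apply]⟩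
  · -- left inverse
    intro x
    apply Subtype.ext
    apply Subtype.ext
    funext a
    exact congrArg Subtype.val (iso.apply_symm_apply _)
  · -- right inverse
    intro w
    apply Subtype.ext
    funext a
    have h : (⟨((iso (w.1 a) : {x // x ∈ B}) : Fin n),
        hmem _ (by
          ext b
          simp only [Finset.mem_image, Finset.mem_univ, true_and]
          constructor
          · rintro ⟨c, rfl⟩; exact (iso (w.1 c)).2
          · intro hb
            obtain ⟨c, hc⟩ := w.2.1 (iso.symm ⟨b, hb⟩)
            exact ⟨c, by rw [hc, OrderIso.apply_symm_apply]⟩) a⟩ : {x // x ∈ B}) =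
        iso (w.1 a) := Subtype.ext rfl
    calc iso.symm _ = iso.symm (iso (w.1 a)) := congrArg iso.symm h
    _ = w.1 a := OrderIso.symm_apply_apply _ _

lemma count_u (g : ConvexGeometry I) (s : I → Bool) (n : ℕ) :
    Nat.card {u : I → Fin n // Pat g (pleq u s) (pneg s)} =
      ∑ k ∈ Finset.range (Fintype.card I + 1), n.choose k * patCount g s k := by
  classical
  have e1 : {u : I → Fin n // Pat g (pleq u s) (pneg s)} ≃
      Σ B : Finset (Fin n), {x : {u : I → Fin n // Pat g (pleq u s) (pneg s)} //
        Finset.image x.1 Finset.univ = B} :=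
    (Equiv.sigmaFiberEquiv _).symm
  rw [Nat.card_congr e1, natCard_sigma]
  have e2 : ∀ B : Finset (Fin n),
      Nat.card {x : {u : I → Fin n // Pat g (pleq u s) (pneg s)} //
        Finset.image x.1 Finset.univ = B} = patCount g s B.card := fun B =>
    Nat.card_congr (fiberEquiv g s B)
  rw [Finset.sum_congr rfl fun B _ => e2 B]
  -- group by cardinality
  have hmap : ∀ B : Finset (Fin n), B ∈ Finset.univ → B.card ∈ Finset.range (n + 1) := by
    intro B _
    rw [Finset.mem_range]
    have := B.card_le_univ
    simp only [Finset.card_univ, Fintype.card_fin] at this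
    omega
  rw [← Finset.sum_fiberwise_of_maps_to hmap (fun B => patCount g s B.card)]
  have hinner : ∀ k ∈ Finset.range (n + 1),
      ∑ B ∈ Finset.univ.filter (fun B : Finset (Fin n) => B.card = k),
        patCount g s B.card = n.choose k * patCount g s k := by
    intro k _
    rw [Finset.sum_congr rfl (fun B hB => by
      rw [(Finset.mem_filter.1 hB).2]), Finset.sum_const, smul_eq_mul]
    congr 1
    have : Finset.univ.filter (fun B : Finset (Fin n) => B.card = k) =
        Finset.powersetCard k (Finset.univ : Finset (Fin n)) := by
      rw [Finset.powersetCard_eq_filter, Finset.powerset_univ]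
    rw [this, Finset.card_powersetCard, Finset.card_univ, Fintype.card_fin]
  rw [Finset.sum_congr rfl hinner]
  -- change the summation range
  have hzero1 : ∀ k, Fintype.card I + 1 ≤ k → n.choose k * patCount g s k = 0 := by
    intro k hk
    rw [patCount_eq_zero g s (by omega), mul_zero]
  have hzero2 : ∀ k, n + 1 ≤ k → n.choose k * patCount g s k = 0 := by
    intro k hk
    rw [Nat.choose_eq_zero_of_lt (by omega), zero_mul]
  set m := max n (Fintype.card I) with hm
  have h1 : ∑ k ∈ Finset.range (n + 1), n.choose k * patCount g s k =
      ∑ k ∈ Finset.range (m + 1), n.choose k * patCount g s k := by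
    apply Finset.sum_subset
    · intro k hk
      rw [Finset.mem_range] at *
      omega
    · intro k _ hk
      rw [Finset.mem_range] at hk
      exact hzero2 k (by omega)
  have h2 : ∑ k ∈ Finset.range (Fintype.card I + 1), n.choose k * patCount g s k =
      ∑ k ∈ Finset.range (m + 1), n.choose k * patCount g s k := by
    apply Finset.sum_subset
    · intro k hk
      rw [Finset.mem_range] at *
      omega
    · intro k _ hk
      rw [Finset.mem_range] at hk
      exact hzero1 k (by omega)
  rw [h1, h2]

lemma count_total (g : ConvexGeometry I) (n : ℕ) :
    Nat.card {f : I → ℤ // (∀ x, f x ≠ 0 ∧ |f x| ≤ (n : ℤ)) ∧ EnrichedExtremal g f} =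
      ∑ k ∈ Finset.range (Fintype.card I + 1),
        n.choose k * ∑ s : I → Bool, patCount g s k := by
  classical
  have e0 : {f : I → ℤ // (∀ x, f x ≠ 0 ∧ |f x| ≤ (n : ℤ)) ∧ EnrichedExtremal g f} ≃
      {x : {f : I → ℤ // Adm n f} // EnrichedExtremal g x.1} :=
    ((Equiv.subtypeSubtypeEquivSubtypeInter (Adm n) (EnrichedExtremal g))).symm
  have e1 : {x : {f : I → ℤ // Adm n f} // EnrichedExtremal g x.1} ≃
      {p : (I → Bool) × (I → Fin n) // Pat g (pleq p.2 p.1) (pneg p.1)} := by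
    refine (admEquiv n).subtypeEquiv fun x => ?_
    obtain ⟨f, hf⟩ := x
    have hinv : toF ((admEquiv n) ⟨f, hf⟩).1 ((admEquiv n) ⟨f, hf⟩).2 = f := by
      have := (admEquiv (I := I) n).left_inv ⟨f, hf⟩
      exact congrArg Subtype.val this
    rw [show EnrichedExtremal g f ↔
        EnrichedExtremal g (toF ((admEquiv n) ⟨f, hf⟩).1 ((admEquiv n) ⟨f, hf⟩).2) by
      rw [hinv]]
    exact ee_toF_iff g _ _
  have e2 : {p : (I → Bool) × (I → Fin n) // Pat g (pleq p.2 p.1) (pneg p.1)} ≃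
      Σ s : I → Bool, {u : I → Fin n // Pat g (pleq u s) (pneg s)} :=
    Equiv.subtypeProdEquivSigmaSubtype fun s u => Pat g (pleq u s) (pneg s)
  rw [Nat.card_congr (e0.trans (e1.trans e2)), natCard_sigma]
  rw [Finset.sum_congr rfl fun s _ => count_u g s n]
  rw [Finset.sum_comm]
  exact Finset.sum_congr rfl fun k _ => by rw [Finset.mul_sum]

/-- there is a polynomial `P ∈ ℚ[X]` such that `P(n)` counts the
enriched extremal functions `f : I → ⟦n⟧` for every `n ≥ 1`. -/
theorem stmt_11 (g : ConvexGeometry I) :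
    ∃ P : Polynomial ℚ, ∀ n : ℕ, 1 ≤ n →
      P.eval (n : ℚ) =
        Nat.card {f : I → ℤ //
          (∀ x, f x ≠ 0 ∧ |f x| ≤ (n : ℤ)) ∧ EnrichedExtremal g f} := by
  classical
  refine ⟨∑ k ∈ Finset.range (Fintype.card I + 1),
    Polynomial.C (((∑ s : I → Bool, patCount g s k : ℕ) : ℚ) / (k.factorial : ℚ)) *
      descPochhammer ℚ k, fun n _ => ?_⟩
  rw [count_total g n]
  rw [Polynomial.eval_finset_sum]
  push_cast
  refine Finset.sum_congr rfl fun k _ => ?_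
  rw [Polynomial.eval_mul, Polynomial.eval_C, descPochhammer_eval_eq_descFactorial,
    Nat.descFactorial_eq_factorial_mul_choose]
  have hfac : (k.factorial : ℚ) ≠ 0 := by
    exact_mod_cast k.factorial_ne_zero
  push_cast
  field_simp
end

section
/- Let g be a convex geometry on a finite set I and let F = (F_1,…,F_k) be an ordered partition of I into nonempty blocks; set A_i = F_1 ∪ … ∪ F_i and A_0 = ∅. Then the following are equivalent: (1) for every ordered partition G = (G_1,…,G_l) of I into nonempty blocks that refines F in order (i.e., there exist indices 0 = j_0 < j_1 < … < j_k = l with F_i = G_{j_{i−1}+1} ∪ … ∪ G_{j_i} for each 1 ≤ i ≤ k), every prefix union G_1 ∪ … ∪ G_m (1 ≤ m ≤ l) is convex; (2) each A_i (1 ≤ i ≤ k) is convex and each minor g_{A_{i−1}:A_i} (1 ≤ i ≤ k) is discrete. -/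
variable {I : Type*} [DecidableEq I] [Fintype I]

open Finset

section OrderedPartition

variable {α : Type*} [DecidableEq α]

def IsOrderedPartition [Fintype α] (l : ℕ) (G : ℕ → Finset α) : Prop :=
  (∀ m < l, (G m).Nonempty) ∧ (∀ m < l, ∀ m' < l, m ≠ m' → Disjoint (G m) (G m')) ∧
    (range l).biUnion G = univ

def IsOrderedRefinement (k : ℕ) (F : ℕ → Finset α) (l : ℕ) (G : ℕ → Finset α)
    (j : ℕ → ℕ) : Prop :=
  j 0 = 0 ∧ j k = l ∧ (∀ i < k, j i < j (i + 1)) ∧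
    ∀ i < k, F i = (Ico (j i) (j (i + 1))).biUnion G

variable {k l : ℕ} {F G : ℕ → Finset α} {j : ℕ → ℕ}

theorem biUnion_range_add_one (F : ℕ → Finset α) (i : ℕ) :
    (range (i + 1)).biUnion F = (range i).biUnion F ∪ F i := by
  rw [range_add_one, biUnion_insert, union_comm]

theorem disjoint_biUnion_range
    (hdisj : ∀ i < k, ∀ j < k, i ≠ j → Disjoint (F i) (F j)) {i : ℕ} (hi : i < k) :
    Disjoint ((range i).biUnion F) (F i) := by
  rw [disjoint_biUnion_left]
  intro i' hi'
  rw [mem_range] at hi'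
  exact hdisj i' (hi'.trans hi) i hi hi'.ne

theorem isOrderedRefinement_self (k : ℕ) (F : ℕ → Finset α) :
    IsOrderedRefinement k F k F id :=
  ⟨rfl, rfl, fun i _ => i.lt_succ_self, fun i _ => by
    rw [id, id, Nat.Ico_succ_singleton, singleton_biUnion]⟩

theorem IsOrderedRefinement.biUnion_range (h : IsOrderedRefinement k F l G j) {i : ℕ}
    (hi : i ≤ k) : (range (j i)).biUnion G = (range i).biUnion F := by
  obtain ⟨hj0, -, hjlt, hblock⟩ := h
  induction i with
  | zero => simp [hj0]
  | succ i ih =>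
    rw [range_eq_Ico, ← Ico_union_Ico_eq_Ico (Nat.zero_le _) (hjlt i hi).le, ← range_eq_Ico,
      union_biUnion, ih (by omega), ← hblock i hi, biUnion_range_add_one]

theorem exists_lt_and_le_succ {m : ℕ} (h0 : j 0 < m) (hk : m ≤ j k) :
    ∃ i < k, j i < m ∧ m ≤ j (i + 1) := by
  induction k with
  | zero => omega
  | succ k ih =>
    by_cases hm : m ≤ j k
    · obtain ⟨i, hi, hji⟩ := ih hm
      exact ⟨i, by omega, hji⟩
    · exact ⟨k, k.lt_succ_self, by omega, hk⟩

theorem IsOrderedRefinement.exists_biUnion_range_eq (h : IsOrderedRefinement k F l G j)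
    {m : ℕ} (hm : 1 ≤ m) (hml : m ≤ l) :
    ∃ i < k, ∃ S ⊆ F i, (range m).biUnion G = (range i).biUnion F ∪ S := by
  obtain ⟨i, hi, hjim, hmji⟩ := exists_lt_and_le_succ (j := j) (k := k) (m := m)
    (by rw [h.1]; omega) (by rw [h.2.1]; exact hml)
  refine ⟨i, hi, (Ico (j i) m).biUnion G, ?_, ?_⟩
  · rw [h.2.2.2 i hi]
    exact biUnion_subset_biUnion_of_subset_left G (Ico_subset_Ico le_rfl hmji)
  · rw [range_eq_Ico, ← Ico_union_Ico_eq_Ico (Nat.zero_le _) hjim.le, ← range_eq_Ico,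
      union_biUnion, h.biUnion_range hi.le]

end OrderedPartition

section SplitBlock

variable {α : Type*} [DecidableEq α] {k : ℕ} {F : ℕ → Finset α} {i : ℕ} {S : Finset α}

def splitBlock (F : ℕ → Finset α) (i : ℕ) (S : Finset α) (m : ℕ) : Finset α :=
  if m < i then F m else if m = i then S else if m = i + 1 then F i \ S else F (m - 1)

def splitIndex (i m : ℕ) : ℕ := if m ≤ i then m else m + 1

theorem splitBlock_splitIndex {i' : ℕ} (h : i' ≠ i) :
    splitBlock F i S (splitIndex i i') = F i' := by
  unfold splitBlock splitIndex
  split_ifs <;> first | rfl | omega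

theorem splitIndex_succ {i' : ℕ} (h : i' ≠ i) : splitIndex i (i' + 1) = splitIndex i i' + 1 := by
  unfold splitIndex
  split_ifs <;> omega

theorem splitBlock_subset (hS : S ⊆ F i) (m : ℕ) :
    splitBlock F i S m ⊆ F (if m ≤ i then m else m - 1) := by
  unfold splitBlock
  split_ifs <;> first | rfl | omega | (subst_vars; simp_all [sdiff_subset])

theorem isOrderedRefinement_splitBlock (hi : i < k) (hS : S ⊆ F i) :
    IsOrderedRefinement k F (k + 1) (splitBlock F i S) (splitIndex i) := by
  refine ⟨rfl, by rw [splitIndex, if_neg (by omega)], fun i' _ => by unfold splitIndex; split_ifs <;> omega,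
    fun i' _ => ?_⟩
  rcases eq_or_ne i' i with rfl | hne
  · have hIco : Ico (splitIndex i' i') (splitIndex i' (i' + 1)) = {i' + 1, i'} := by
      simp only [splitIndex, le_refl, if_true, Nat.not_succ_le_self, if_false]
      rw [Nat.Ico_succ_right_eq_insert_Ico (by omega), Nat.Ico_succ_singleton]
    simp [hIco, biUnion_insert, splitBlock, sdiff_union_of_subset hS]
  · rw [splitIndex_succ hne, Nat.Ico_succ_singleton, singleton_biUnion,
      splitBlock_splitIndex hne]

theorem isOrderedPartition_splitBlock [Fintype α] (hF : IsOrderedPartition k F) (hi : i < k)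
    (hS : S ⊆ F i) (hSne : S.Nonempty) (hSc : (F i \ S).Nonempty) :
    IsOrderedPartition (k + 1) (splitBlock F i S) := by
  obtain ⟨hne, hdisj, hcov⟩ := hF
  refine ⟨fun m hm => ?_, fun m hm m' hm' hmm' => ?_, ?_⟩
  · unfold splitBlock
    split_ifs <;> first | assumption | exact hne _ (by omega)
  · by_cases hσ : (if m ≤ i then m else m - 1) = if m' ≤ i then m' else m' - 1
    · have : m = i ∧ m' = i + 1 ∨ m = i + 1 ∧ m' = i := by split_ifs at hσ <;> omega
      rcases this with ⟨rfl, rfl⟩ | ⟨rfl, rfl⟩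
      · simpa [splitBlock] using disjoint_sdiff
      · simpa [splitBlock] using disjoint_sdiff.symm
    · exact (hdisj _ (by split_ifs <;> omega) _ (by split_ifs <;> omega) hσ).mono
        (splitBlock_subset hS m) (splitBlock_subset hS m')
  · have h := (isOrderedRefinement_splitBlock hi hS).biUnion_range le_rfl
    rwa [splitIndex, if_neg (by omega), hcov] at h

theorem biUnion_range_splitBlock :
    (range (i + 1)).biUnion (splitBlock F i S) = (range i).biUnion F ∪ S := by
  rw [biUnion_range_add_one]
  congr 1
  · exact biUnion_congr rfl fun m hm => if_pos (mem_range.mp hm)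
  · simp [splitBlock]

end SplitBlock

namespace ConvexGeometry

variable (g : ConvexGeometry I)

theorem cl_union_eq_of_cl_union_inter_eq {A F S : Finset I} (hS : S ⊆ F)
    (hAF : g.cl (A ∪ F) = A ∪ F) (hdisc : g.cl (A ∪ S) ∩ F = S) : g.cl (A ∪ S) = A ∪ S := by
  refine (subset_cl g _).antisymm' fun x hx => ?_
  have hxAF : x ∈ A ∪ F := hAF ▸ g.mono (union_subset_union_right hS) hx
  rcases mem_union.mp hxAF with hxA | hxF
  · exact mem_union_left _ hxA
  · exact mem_union_right _ (hdisc ▸ mem_inter.mpr ⟨hx, hxF⟩)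

theorem cl_union_inter_eq_of_cl_union_erase {A F B : Finset I} (hAF : Disjoint A F) (hB : B ⊆ F)
    (hconv : ∀ x ∈ F, g.cl (A ∪ F.erase x) = A ∪ F.erase x) : g.cl (A ∪ B) ∩ F = B := by
  refine subset_antisymm (fun x hx => ?_) fun x hx =>
    mem_inter.mpr ⟨g.subset_cl _ (mem_union_right _ hx), hB hx⟩
  obtain ⟨hxcl, hxF⟩ := mem_inter.mp hx
  by_contra hxB
  have hBx : B ⊆ F.erase x := fun y hy => mem_erase.mpr ⟨fun h => hxB (h ▸ hy), hB hy⟩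
  have hx' := hconv x hxF ▸ g.mono (union_subset_union_right hBx) hxcl
  rcases mem_union.mp hx' with hxA | hxF'
  · exact disjoint_left.mp hAF hxA hxF
  · exact (notMem_erase x F) hxF'

variable {k : ℕ} {F : ℕ → Finset I}

theorem cl_biUnion_range_of_refinements (hF : IsOrderedPartition k F)
    (h : ∀ l G j, IsOrderedPartition l G → IsOrderedRefinement k F l G j →
      ∀ m, 1 ≤ m → m ≤ l → g.cl ((range m).biUnion G) = (range m).biUnion G)
    {i : ℕ} (hi : i ≤ k) :
    g.cl ((range i).biUnion F) = (range i).biUnion F := by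
  rcases Nat.eq_zero_or_pos i with rfl | hpos
  · simpa using g.loopless
  · exact h k F id hF (isOrderedRefinement_self k F) i hpos hi

theorem cl_union_of_refinements (hF : IsOrderedPartition k F)
    (h : ∀ l G j, IsOrderedPartition l G → IsOrderedRefinement k F l G j →
      ∀ m, 1 ≤ m → m ≤ l → g.cl ((range m).biUnion G) = (range m).biUnion G)
    {i : ℕ} (hi : i < k) {S : Finset I} (hS : S ⊆ F i) :
    g.cl ((range i).biUnion F ∪ S) = (range i).biUnion F ∪ S := by
  rcases S.eq_empty_or_nonempty with rfl | hSne
  · simpa using g.cl_biUnion_range_of_refinements hF h hi.le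
  rcases (F i \ S).eq_empty_or_nonempty with hSc | hSc
  · rw [hS.antisymm (sdiff_eq_empty_iff_subset.mp hSc), ← biUnion_range_add_one]
    exact g.cl_biUnion_range_of_refinements hF h hi
  · rw [← biUnion_range_splitBlock]
    exact h _ _ _ (isOrderedPartition_splitBlock hF hi hS hSne hSc)
      (isOrderedRefinement_splitBlock hi hS) (i + 1) (by omega) (by omega)

end ConvexGeometry

/-- for an ordered partition `F = (F_0,…,F_{k-1})` of `I` into
nonempty blocks with prefix unions `A_i`, the following are equivalent:
(1) for every ordered partition `G` of `I` into nonempty blocks refining `F`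
in order, every prefix union of `G` is convex;
(2) each `A_i` (`1 ≤ i ≤ k`) is convex and each minor `g_{A_i:A_{i+1}}`
(`0 ≤ i < k`) is discrete. -/
theorem stmt_13 (g : ConvexGeometry I) (k : ℕ) (F : ℕ → Finset I)
    (hne : ∀ i < k, (F i).Nonempty)
    (hdisj : ∀ i < k, ∀ j < k, i ≠ j → Disjoint (F i) (F j))
    (hcov : (Finset.range k).biUnion F = Finset.univ)
    (A : ℕ → Finset I) (hA : ∀ i, A i = (Finset.range i).biUnion F) :
    (∀ (l : ℕ) (G : ℕ → Finset I) (j : ℕ → ℕ),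
        (∀ m < l, (G m).Nonempty) →
        (∀ m < l, ∀ m' < l, m ≠ m' → Disjoint (G m) (G m')) →
        (Finset.range l).biUnion G = Finset.univ →
        j 0 = 0 → j k = l → (∀ i < k, j i < j (i + 1)) →
        (∀ i < k, F i = (Finset.Ico (j i) (j (i + 1))).biUnion G) →
        ∀ m, 1 ≤ m → m ≤ l →
          g.cl ((Finset.range m).biUnion G) = (Finset.range m).biUnion G) ↔
      ((∀ i, 1 ≤ i → i ≤ k → g.cl (A i) = A i) ∧
        ∀ i < k, ∀ B ⊆ A (i + 1) \ A i,
          g.cl (A i ∪ B) ∩ (A (i + 1) \ A i) = B) := by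
  obtain rfl : A = fun i => (range i).biUnion F := funext hA
  have hsdiff : ∀ i < k, (range (i + 1)).biUnion F \ (range i).biUnion F = F i := fun i hi => by
    rw [biUnion_range_add_one, union_sdiff_cancel_left (disjoint_biUnion_range hdisj hi)]
  constructor
  · intro h
    have hconv : ∀ i < k, ∀ S ⊆ F i,
        g.cl ((range i).biUnion F ∪ S) = (range i).biUnion F ∪ S := fun i hi S hS =>
      g.cl_union_of_refinements ⟨hne, hdisj, hcov⟩ (fun l G j hG hGF => h l G j hG.1 hG.2.1
        hG.2.2 hGF.1 hGF.2.1 hGF.2.2.1 hGF.2.2.2) hi hS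
    refine ⟨fun i hi hik => ?_, fun i hi B hB => ?_⟩
    · obtain ⟨i, rfl⟩ := Nat.exists_eq_add_of_le' hi
      simpa only [biUnion_range_add_one] using hconv i (by omega) (F i) subset_rfl
    · rw [hsdiff i hi] at hB ⊢
      exact g.cl_union_inter_eq_of_cl_union_erase (disjoint_biUnion_range hdisj hi) hB fun x _ =>
        hconv i hi _ (erase_subset x _)
  · rintro ⟨hconv, hdisc⟩ l G j - - - hj0 hjk hjlt hblock m hm hml
    obtain ⟨i, hi, S, hS, hGS⟩ :=
      IsOrderedRefinement.exists_biUnion_range_eq ⟨hj0, hjk, hjlt, hblock⟩ hm hml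
    have hdisc_i := hdisc i hi S (hsdiff i hi ▸ hS)
    rw [hsdiff i hi] at hdisc_i
    rw [hGS]
    refine g.cl_union_eq_of_cl_union_inter_eq hS ?_ hdisc_i
    rw [← biUnion_range_add_one]
    exact hconv (i + 1) (by omega) (by omega)
end

section
/- Let g be a convex geometry on a finite set I and let A ⊆ B ⊆ I be convex sets. Then the set of extreme points of the minor g_{A:B}, namely {x ∈ B \ A : g_{A:B}((B \ A) \ {x}) = (B \ A) \ {x}}, equals Ex(B) \ Ex(A), where for a convex set K, Ex(K) = {x ∈ K : K \ {x} is convex}. -/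
variable {I : Type*} [DecidableEq I] [Fintype I]

/-- for convex sets `A ⊆ B`, the extreme points of the minor
`g_{A:B}` are exactly `Ex(B) \ Ex(A)`, where both extreme-point sets are
described via convexity of the deletion of a point. -/
theorem stmt_14 (g : ConvexGeometry I) (A B : Finset I)
    (hAB : A ⊆ B) (hA : g.cl A = A) (hB : g.cl B = B) :
    ((B \ A).filter fun x =>
        g.cl (A ∪ (B \ A).erase x) ∩ (B \ A) = (B \ A).erase x) =
      (B.filter fun x => g.cl (B.erase x) = B.erase x) \
        (A.filter fun x => g.cl (A.erase x) = A.erase x) := by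
  have hunion : ∀ x, x ∉ A → A ∪ (B \ A).erase x = B.erase x := by
    intro x hxA
    ext y
    simp only [Finset.mem_union, Finset.mem_erase, Finset.mem_sdiff]
    constructor
    · rintro (h | ⟨h1, h2, h3⟩)
      · exact ⟨fun e => hxA (e ▸ h), hAB h⟩
      · exact ⟨h1, h2⟩
    · rintro ⟨h1, h2⟩
      by_cases h3 : y ∈ A
      · exact Or.inl h3
      · exact Or.inr ⟨h1, h2, h3⟩
  ext x
  simp only [Finset.mem_filter, Finset.mem_sdiff, not_and]
  constructor
  · rintro ⟨⟨hxB, hxA⟩, hcl⟩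
    rw [hunion x hxA] at hcl
    have hsub : g.cl (B.erase x) ⊆ B := fun y hy => hB ▸ g.mono (Finset.erase_subset _ _) hy
    have hconv : g.cl (B.erase x) = B.erase x := by
      refine subset_antisymm ?_ (g.subset_cl _)
      intro y hy
      have hyB : y ∈ B := hsub hy
      by_cases hyA : y ∈ A
      · exact Finset.mem_erase.mpr ⟨fun h => hxA (h ▸ hyA), hyB⟩
      · have hmem : y ∈ g.cl (B.erase x) ∩ (B \ A) := by
          simp [Finset.mem_inter, Finset.mem_sdiff, hy, hyB, hyA]
        rw [hcl] at hmem
        exact Finset.mem_erase.mpr ⟨(Finset.mem_erase.mp hmem).1, hyB⟩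
    exact ⟨⟨hxB, hconv⟩, fun hxA' => absurd hxA' hxA⟩
  · rintro ⟨⟨hxB, hBx⟩, hnot⟩
    have hxA : x ∉ A := by
      intro hxA
      apply hnot hxA
      refine subset_antisymm ?_ (g.subset_cl _)
      intro y hy
      have h1 : y ∈ A := hA ▸ g.mono (Finset.erase_subset _ _) hy
      have h2 : y ∈ B.erase x := hBx ▸ g.mono (fun z hz => Finset.mem_erase.mpr
        ⟨(Finset.mem_erase.mp hz).1, hAB (Finset.mem_erase.mp hz).2⟩) hy
      exact Finset.mem_erase.mpr ⟨(Finset.mem_erase.mp h2).1, h1⟩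
    refine ⟨⟨hxB, hxA⟩, ?_⟩
    rw [hunion x hxA, hBx]
    ext y
    simp only [Finset.mem_inter, Finset.mem_erase, Finset.mem_sdiff]
    tauto
end

section
/- Let g be a convex geometry on a finite set I and let L_g be its lattice of convex sets. Let M be a set of convex sets each of which is rank-modular, i.e., for every m ∈ M and every convex set x one has |m ∩ x| + |m ∨ x| = |m| + |x|. Let D be a collection of convex sets closed under pairwise unions and intersections (in particular, the union of any two members of D is convex). Then any two elements x, y of the sublattice of L_g generated by M ∪ D satisfy x ∨ y = x ∪ y; in particular, the sublattice of L_g generated by M ∪ D is distributive. -/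
variable {I : Type*} [DecidableEq I] [Fintype I]

/-- The sublattice of the lattice of convex sets of `g` generated by a family
`X` of convex sets: the smallest collection containing `X` and closed under
meet `A ∧ B = A ∩ B` and join `A ∨ B = g(A ∪ B)`. -/
inductive GenSublattice (g : ConvexGeometry I) (X : Set (Finset I)) : Finset I → Prop
  | base {A : Finset I} : A ∈ X → GenSublattice g X A
  | inf {A B : Finset I} : GenSublattice g X A → GenSublattice g X B →
      GenSublattice g X (A ∩ B)
  | sup {A B : Finset I} : GenSublattice g X A → GenSublattice g X B →
      GenSublattice g X (g.cl (A ∪ B))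

/-!
If `m` is rank-modular then `|g(m ∪ x)| = |m ∪ x|` for every convex `x`, so `m ∨ x = m ∪ x`.
Sets with this property are closed under intersection, and for such `m` one has
`g((m ∩ x) ∪ y) ⊆ g(m ∪ y) ∩ g(x ∪ y)`, which is `(m ∩ x) ∪ y` as soon as `y` and `x ∪ y` are
convex. Hence the property "`z ∪ d` is convex for every `d ∈ D ∪ {∅, I}`" survives adding a
term `m ∩ d` to `z`, so every finite union of such terms is convex. These unions form the
sublattice of the Boolean lattice of subsets generated by `M ∪ D`, so on it joins are unions
and distributivity is inherited.
-/

open Finset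
open scoped SetFamily

lemma InfClosed.infs {α : Type*} [SemilatticeInf α] {s t : Set α} (hs : InfClosed s)
    (ht : InfClosed t) : InfClosed (s ⊼ t) := by
  rw [← Set.infs_self_subset, Set.infs_infs_infs_comm]
  exact Set.infs_subset (Set.infs_self_subset.2 hs) (Set.infs_self_subset.2 ht)

lemma IsSublattice.insert_bot_insert_top {α : Type*} [Lattice α] [BoundedOrder α]
    {s : Set α} (hs : IsSublattice s) : IsSublattice (insert ⊥ (insert ⊤ s)) := by
  have htop : IsSublattice (insert ⊤ s) :=
    ⟨hs.1.insert_upperBounds fun _ _ => le_top, hs.2.insert_upperBounds fun _ _ => le_top⟩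
  exact ⟨htop.1.insert_lowerBounds fun _ _ => bot_le, htop.2.insert_lowerBounds fun _ _ => bot_le⟩

namespace ConvexGeometry

variable {g : ConvexGeometry I} {m m' x y z e : Finset I}

lemma cl_univ (g : ConvexGeometry I) : g.cl univ = univ :=
  (subset_univ _).antisymm (g.subset_cl _)

lemma cl_eq_of_subset (h : g.cl x ⊆ x) : g.cl x = x :=
  h.antisymm (g.subset_cl x)

def IsRankModular (g : ConvexGeometry I) (m : Finset I) : Prop :=
  ∀ x, g.cl x = x → (m ∩ x).card + (g.cl (m ∪ x)).card = m.card + x.card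

def JoinEqUnion (g : ConvexGeometry I) (m : Finset I) : Prop :=
  ∀ x, g.cl x = x → g.cl (m ∪ x) = m ∪ x

lemma IsRankModular.joinEqUnion (hm : g.IsRankModular m) : g.JoinEqUnion m := by
  intro x hx
  have hcard : (g.cl (m ∪ x)).card ≤ (m ∪ x).card := by
    have := hm x hx
    have := card_inter_add_card_union m x
    omega
  exact (eq_of_subset_of_card_le (g.subset_cl _) hcard).symm

lemma joinEqUnion_univ (g : ConvexGeometry I) : g.JoinEqUnion univ := by
  intro x _
  rw [union_eq_left.2 (subset_univ x), cl_univ]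

lemma JoinEqUnion.cl_inter_union (hm : g.JoinEqUnion m) (hy : g.cl y = y)
    (hxy : g.cl (x ∪ y) = x ∪ y) : g.cl (m ∩ x ∪ y) = m ∩ x ∪ y := by
  refine cl_eq_of_subset ?_
  calc g.cl (m ∩ x ∪ y) ⊆ g.cl (m ∪ y) ∩ g.cl (x ∪ y) :=
        subset_inter (g.mono (union_subset_union_left inter_subset_left))
          (g.mono (union_subset_union_left inter_subset_right))
    _ = m ∩ x ∪ y := by rw [hm y hy, hxy, inter_union_distrib_right]

lemma JoinEqUnion.inter (hm : g.JoinEqUnion m) (hm' : g.JoinEqUnion m') :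
    g.JoinEqUnion (m ∩ m') :=
  fun x hx => hm.cl_inter_union hx (hm' x hx)

lemma infClosed_joinEqUnion (g : ConvexGeometry I) : InfClosed {m | g.JoinEqUnion m} :=
  fun _ hm _ hm' => hm.inter hm'

def unionConvexWith (g : ConvexGeometry I) (E : Set (Finset I)) : Set (Finset I) :=
  {z | ∀ d ∈ E, g.cl (z ∪ d) = z ∪ d}

section unionConvexWith

variable {E : Set (Finset I)}

lemma union_inter_mem_unionConvexWith (hE : SupClosed E) (hm : g.JoinEqUnion m) (he : e ∈ E)
    (hz : z ∈ g.unionConvexWith E) : z ∪ m ∩ e ∈ g.unionConvexWith E := by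
  intro d hd
  rw [union_comm z, union_assoc]
  refine hm.cl_inter_union (hz d hd) ?_
  rw [union_left_comm]
  exact hz _ (hE he hd)

lemma union_mem_unionConvexWith (hE : SupClosed E)
    (hx : x ∈ supClosure ({m | g.JoinEqUnion m} ⊼ E)) (hz : z ∈ g.unionConvexWith E) :
    z ∪ x ∈ g.unionConvexWith E := by
  have hsub : supClosure ({m | g.JoinEqUnion m} ⊼ E) ⊆
      {x | ∀ z ∈ g.unionConvexWith E, z ∪ x ∈ g.unionConvexWith E} := by
    refine supClosure_min ?_ ?_
    · rintro _ ⟨m, hm, e, he, rfl⟩ z hz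
      exact union_inter_mem_unionConvexWith hE hm he hz
    · intro x hx y hy z hz
      rw [sup_eq_union, ← union_assoc]
      exact hy _ (hx z hz)
  exact hsub hx z hz

end unionConvexWith

lemma cl_eq_of_mem_latticeClosure {M D : Set (Finset I)} (hM : ∀ m ∈ M, g.JoinEqUnion m)
    (hD : IsSublattice D) (hDconv : ∀ d ∈ D, g.cl d = d) (hx : x ∈ latticeClosure (M ∪ D)) :
    g.cl x = x := by
  set E : Set (Finset I) := insert ∅ (insert univ D)
  have hE : IsSublattice E := hD.insert_bot_insert_top
  have hsub : latticeClosure (M ∪ D) ⊆ supClosure ({m | g.JoinEqUnion m} ⊼ E) := by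
    refine latticeClosure_min (Set.union_subset ?_ ?_)
      ⟨supClosed_supClosure, ((infClosed_joinEqUnion g).infs hE.2).supClosure⟩
    · intro m hm
      exact subset_supClosure (Set.mem_infs.2 ⟨m, hM m hm, univ, by simp [E], inter_univ m⟩)
    · intro d hd
      exact subset_supClosure
        (Set.mem_infs.2 ⟨univ, g.joinEqUnion_univ, d, by simp [E, hd], univ_inter d⟩)
  have hempty : ∅ ∈ g.unionConvexWith E := by
    rintro d (rfl | rfl | hd)
    · simp [g.loopless]
    · simp [g.cl_univ]
    · rw [empty_union]; exact hDconv d hd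
  simpa using union_mem_unionConvexWith hE.1 (hsub hx) hempty ∅ (by simp [E])

lemma mem_latticeClosure_of_genSublattice {X : Set (Finset I)}
    (hX : ∀ x ∈ latticeClosure X, g.cl x = x) (hx : GenSublattice g X x) :
    x ∈ latticeClosure X := by
  induction hx with
  | base hA => exact subset_latticeClosure hA
  | inf _ _ ihA ihB => exact isSublattice_latticeClosure.2 ihA ihB
  | sup _ _ ihA ihB =>
    have hAB : _ ∪ _ ∈ latticeClosure X := isSublattice_latticeClosure.1 ihA ihB
    rwa [hX _ hAB]

end ConvexGeometry

open ConvexGeometry in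
theorem stmt_15_general (g : ConvexGeometry I) (M D : Set (Finset I))
    (hMmod : ∀ m ∈ M, ∀ x : Finset I, g.cl x = x →
      (m ∩ x).card + (g.cl (m ∪ x)).card = m.card + x.card)
    (hD : ∀ d ∈ D, g.cl d = d)
    (hDcl : ∀ d ∈ D, ∀ d' ∈ D, d ∪ d' ∈ D ∧ d ∩ d' ∈ D) :
    (∀ x y : Finset I, GenSublattice g (M ∪ D) x → GenSublattice g (M ∪ D) y →
        g.cl (x ∪ y) = x ∪ y) ∧
      (∀ x y z : Finset I, GenSublattice g (M ∪ D) x →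
        GenSublattice g (M ∪ D) y → GenSublattice g (M ∪ D) z →
          x ∩ g.cl (y ∪ z) = g.cl ((x ∩ y) ∪ (x ∩ z))) := by
  have hDsub : IsSublattice D :=
    ⟨fun d hd d' hd' => (hDcl d hd d' hd').1, fun d hd d' hd' => (hDcl d hd d' hd').2⟩
  have hconv : ∀ x ∈ latticeClosure (M ∪ D), g.cl x = x := fun x hx =>
    cl_eq_of_mem_latticeClosure (fun m hm => IsRankModular.joinEqUnion (hMmod m hm)) hDsub hD hx
  have hmem : ∀ x, GenSublattice g (M ∪ D) x → x ∈ latticeClosure (M ∪ D) :=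
    fun x hx => mem_latticeClosure_of_genSublattice hconv hx
  have hunion {x y : Finset I} (hx : x ∈ latticeClosure (M ∪ D))
      (hy : y ∈ latticeClosure (M ∪ D)) : x ∪ y ∈ latticeClosure (M ∪ D) :=
    isSublattice_latticeClosure.1 hx hy
  have hinter {x y : Finset I} (hx : x ∈ latticeClosure (M ∪ D))
      (hy : y ∈ latticeClosure (M ∪ D)) : x ∩ y ∈ latticeClosure (M ∪ D) :=
    isSublattice_latticeClosure.2 hx hy
  refine ⟨fun x y hx hy => hconv _ (hunion (hmem x hx) (hmem y hy)), fun x y z hx hy hz => ?_⟩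
  rw [hconv _ (hunion (hmem y hy) (hmem z hz)),
    hconv _ (hunion (hinter (hmem x hx) (hmem y hy)) (hinter (hmem x hx) (hmem z hz))),
    inter_union_distrib_left]

/-- if `M` is a set of rank-modular convex sets and `D` a
collection of convex sets closed under pairwise unions and intersections,
then any two elements `x, y` of the sublattice generated by `M ∪ D` satisfy
`x ∨ y = x ∪ y`; in particular this sublattice is distributive. -/
theorem stmt_15 (g : ConvexGeometry I) (M D : Set (Finset I))
    (hM : ∀ m ∈ M, g.cl m = m)
    (hMmod : ∀ m ∈ M, ∀ x : Finset I, g.cl x = x →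
      (m ∩ x).card + (g.cl (m ∪ x)).card = m.card + x.card)
    (hD : ∀ d ∈ D, g.cl d = d)
    (hDcl : ∀ d ∈ D, ∀ d' ∈ D, d ∪ d' ∈ D ∧ d ∩ d' ∈ D) :
    (∀ x y : Finset I, GenSublattice g (M ∪ D) x → GenSublattice g (M ∪ D) y →
        g.cl (x ∪ y) = x ∪ y) ∧
      (∀ x y z : Finset I, GenSublattice g (M ∪ D) x →
        GenSublattice g (M ∪ D) y → GenSublattice g (M ∪ D) z →
          x ∩ g.cl (y ∪ z) = g.cl ((x ∩ y) ∪ (x ∩ z))) :=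
  stmt_15_general g M D hMmod hD hDcl
end
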